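/- arXiv:1810.07393 — 5 statements merged into one kernel-verified Lean document; each statement's English description precedes it below -/
import Mathlib

section
/- Let C̄ ≥ 2 be an integer, n ≥ 1 an integer, and γ_A, γ_B, m arbitrary reals. The characteristic polynomial of the 3C̄×3C̄ matrix M^0 defined in the context satisfies det(λ I_{3C̄} − M^0) = λ^{C̄−1}(λ−1)(λ^{C̄} − γ_A)(λ^{C̄} − γ_B) (as an identity of polynomials in λ). -/
section AuxCompanion

open Matrix Polynomial Finset

variable {R : Type*} [CommRing R]

def gMat (k : ℕ) (x c : R) : Matrix (Fin k) (Fin k) R :=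
  fun i j => if (i : ℕ) = 0 then (if (j : ℕ) = k - 1 then c else 0)
    else if (i : ℕ) = (j : ℕ) then x else if (i : ℕ) = (j : ℕ) + 1 then -1 else 0

lemma gMat_submatrix (k : ℕ) (x c : R) :
    (gMat (k+2) x c).submatrix (Fin.succAbove 1) Fin.succ = gMat (k+1) x c := by
  ext r s
  simp only [Matrix.submatrix_apply, Fin.succAbove, Fin.lt_def, gMat, Fin.coe_castSucc,
    Fin.val_succ, Fin.val_one]
  rcases eq_or_ne (r : ℕ) 0 with h | h
  · simp [h]
  · have : ¬ ((r:ℕ) < 1) := by omega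
    simp [this, h]

lemma det_gMat : ∀ (k : ℕ), 1 ≤ k → ∀ (x c : R), (gMat k x c).det = c := by
  intro k
  induction k with
  | zero => omega
  | succ k ih =>
    intro _ x c
    match k, ih with
    | 0, _ => simp [Matrix.det_fin_one, gMat]
    | (k+1), ih =>
      rw [Matrix.det_succ_column_zero, Fin.sum_univ_succ, Fin.sum_univ_succ]
      have h0 : gMat (k+2) x c (0 : Fin (k+2)) 0 = 0 := by
        simp [gMat]
      have h1 : gMat (k+2) x c (Fin.succ 0) 0 = -1 := by
        simp [gMat]
      have h2 : ∀ i : Fin k, gMat (k+2) x c i.succ.succ 0 = 0 := by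
        intro i
        simp [gMat]
      simp only [h0, h1, h2, mul_zero, zero_mul, mul_neg, mul_one, neg_neg,
        Finset.sum_const_zero, add_zero, Fin.val_succ, Fin.val_zero, pow_one, pow_zero,
        one_mul, neg_mul]
      have : Fin.succ (0 : Fin (k+1)) = (1 : Fin (k+2)) := rfl
      rw [this, gMat_submatrix]
      rw [ih (by omega) x c]
      ring

open Matrix Polynomial Finset

variable {R : Type*} [CommRing R]

def aMat (k : ℕ) (x c : R) : Matrix (Fin k) (Fin k) R :=
  fun i j => if (i : ℕ) = (j : ℕ) then x
    else if (i : ℕ) = 0 ∧ (j : ℕ) = k - 1 then c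
    else if (i : ℕ) = (j : ℕ) + 1 then -1 else 0

lemma det_aMat (k : ℕ) (hk : 2 ≤ k) (x c : R) : (aMat k x c).det = x ^ k + c := by
  obtain ⟨k, rfl⟩ : ∃ k', k = k' + 2 := ⟨k - 2, by omega⟩
  rw [Matrix.det_succ_column_zero, Fin.sum_univ_succ, Fin.sum_univ_succ]
  have h0 : aMat (k+2) x c (0 : Fin (k+2)) 0 = x := by simp [aMat]
  have h1 : aMat (k+2) x c (Fin.succ 0) 0 = -1 := by simp [aMat]
  have h2 : ∀ i : Fin k, aMat (k+2) x c i.succ.succ 0 = 0 := by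
    intro i; simp [aMat]
  have hm1 : (aMat (k+2) x c).submatrix (Fin.succAbove 1) Fin.succ = gMat (k+1) x c := by
    ext r s
    simp only [Matrix.submatrix_apply, Fin.succAbove, Fin.lt_def, aMat, gMat, Fin.coe_castSucc,
      Fin.val_succ, Fin.val_one]
    rcases eq_or_ne (r : ℕ) 0 with h | h
    · simp [h]
    · have : ¬ ((r:ℕ) < 1) := by omega
      simp [this, h]
  have hm0 : ((aMat (k+2) x c).submatrix (Fin.succAbove 0) Fin.succ).det = x ^ (k+1) := by
    have htri : ((aMat (k+2) x c).submatrix (Fin.succAbove 0) Fin.succ).BlockTriangular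
        OrderDual.toDual := by
      intro i j hij
      have hij' : (i : ℕ) < (j : ℕ) := hij
      simp only [Matrix.submatrix_apply, aMat, Fin.succAbove, Fin.lt_def, Fin.coe_castSucc,
        Fin.val_succ, Fin.val_zero]
      have : ¬ ((i:ℕ) < 0) := by omega
      simp [this]
      have e1 : ¬ ((i:ℕ) = (j:ℕ)) := by omega
      have e2 : ¬ ((i:ℕ) = (j:ℕ) + 1) := by omega
      simp [e1, e2]
    have : ∀ i : Fin (k+1),
        (aMat (k+2) x c).submatrix (Fin.succAbove 0) Fin.succ i i = x := by
      intro i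
      simp only [Matrix.submatrix_apply, aMat, Fin.succAbove, Fin.lt_def]
      have : ¬ ((i:ℕ) < 0) := by omega
      simp [this]
    rw [Matrix.det_of_lowerTriangular _ htri, Finset.prod_congr rfl (fun i _ => this i)]
    simp
  simp only [h0, h1, h2, mul_zero, zero_mul, Finset.sum_const_zero, add_zero,
    Fin.val_succ, Fin.val_zero, pow_one, pow_zero, one_mul, mul_neg, mul_one, neg_mul, neg_neg]
  have e1 : Fin.succ (0 : Fin (k+1)) = (1 : Fin (k+2)) := rfl
  rw [e1, hm1, hm0, det_gMat (k+1) (by omega) x c]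
  ring
def cMat (k : ℕ) (γ : R) : Matrix (Fin k) (Fin k) R :=
  fun i j => if (i : ℕ) = 0 ∧ (j : ℕ) = k - 1 then γ
    else if (i : ℕ) = (j : ℕ) + 1 then 1 else 0

def pMat (k : ℕ) : Matrix (Fin k) (Fin k) R :=
  fun i j => if (i : ℕ) = 0 then (if (j : ℕ) = 0 then 1 else 0)
    else if (i : ℕ) = (j : ℕ) + 1 then 1 else 0

lemma cMat_charpoly (k : ℕ) (hk : 2 ≤ k) (γ : R) :
    (cMat k γ).charpoly = X ^ k - C γ := by
  have hch : charmatrix (cMat k γ) = aMat k X (-C γ) := by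
    ext i j
    by_cases h : i = j
    · subst h
      rw [Matrix.charmatrix_apply_eq]
      have h1 : ¬ ((i : ℕ) = 0 ∧ (i : ℕ) = k - 1) := by omega
      have h2 : ¬ ((i : ℕ) = (i : ℕ) + 1) := by omega
      simp [cMat, aMat, h1, h2]
    · rw [Matrix.charmatrix_apply_ne _ _ _ h]
      have hv : ¬ ((i : ℕ) = (j : ℕ)) := fun hh => h (Fin.ext hh)
      simp only [cMat, aMat, hv, if_false]
      by_cases h1 : (i : ℕ) = 0 ∧ (j : ℕ) = k - 1
      · simp [h1]
      · by_cases h2 : (i : ℕ) = (j : ℕ) + 1 <;> simp [h1, h2]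
  rw [Matrix.charpoly, hch, det_aMat k hk]
  ring

lemma pMat_charpoly (k : ℕ) (hk : 1 ≤ k) :
    (pMat (R := R) k).charpoly = X ^ (k - 1) * (X - 1) := by
  obtain ⟨k, rfl⟩ : ∃ k', k = k' + 1 := ⟨k - 1, by omega⟩
  have htri : (pMat (R := R) (k+1)).BlockTriangular OrderDual.toDual := by
    intro i j hij
    have hij' : (i : ℕ) < (j : ℕ) := hij
    have h1 : ¬ ((j : ℕ) = 0) := by omega
    have h2 : ¬ ((i : ℕ) = (j : ℕ) + 1) := by omega
    simp only [pMat, h1, h2, if_false]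
    split <;> rfl
  rw [Matrix.charpoly, Matrix.det_of_lowerTriangular _ htri.charmatrix]
  have hdiag : ∀ i : Fin (k+1),
      charmatrix (pMat (R := R) (k+1)) i i = if (i : ℕ) = 0 then X - 1 else X := by
    intro i
    rw [Matrix.charmatrix_apply_eq]
    by_cases h : (i : ℕ) = 0
    · simp [pMat, h]
    · have h2 : ¬ ((i : ℕ) = (i : ℕ) + 1) := by omega
      simp [pMat, h, h2]
  rw [Finset.prod_congr rfl (fun i _ => hdiag i)]
  rw [Fin.prod_univ_succ]
  simp [mul_comm]

end AuxCompanion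


open Matrix

/-- The 3×3 block `M_1^0`. -/
noncomputable def M1blk (m : ℝ) (n : ℕ) : Matrix (Fin 3) (Fin 3) ℝ :=
  !![0, 0, 0; 0, 1, 0; 2 * m * Real.sqrt n, 0, 0]

/-- The 3×3 block `M_2^0`. -/
noncomputable def M2blk (m : ℝ) (n : ℕ) : Matrix (Fin 3) (Fin 3) ℝ :=
  !![0, 0, 0; 0, 0, 0; 2 * m * Real.sqrt n, 0, 0]

/-- The 3×3 block `M_C̄^0`. -/
noncomputable def MCblk (γA γB m : ℝ) (n : ℕ) : Matrix (Fin 3) (Fin 3) ℝ :=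
  !![γA, 0, 0; 0, 0, 0; 2 * m * Real.sqrt n, 0, γB]

/-- The `3C̄ × 3C̄` matrix `M^0`, indexed by (block index, within-block index):
its first block row is `(M_1^0, M_2^0, …, M_2^0, M_C̄^0)`, the blocks in positions
`(i+1, i)` are the 3×3 identity, and all other blocks are zero. -/
noncomputable def M0mat (Cb : ℕ) (γA γB m : ℝ) (n : ℕ) :
    Matrix (Fin Cb × Fin 3) (Fin Cb × Fin 3) ℝ :=
  fun q r =>
    if q.1.val = 0 then
      (if r.1.val = 0 then M1blk m n
       else if r.1.val = Cb - 1 then MCblk γA γB m n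
       else M2blk m n) q.2 r.2
    else if q.1.val = r.1.val + 1 then (1 : Matrix (Fin 3) (Fin 3) ℝ) q.2 r.2
    else 0

open Polynomial in
/-- The characteristic polynomial of `M^0` is
`λ^{C̄−1} (λ−1) (λ^{C̄} − γ_A) (λ^{C̄} − γ_B)`. -/
theorem stmt2 (Cb n : ℕ) (hCb : 2 ≤ Cb) (hn : 1 ≤ n) (γA γB m : ℝ) :
    (M0mat Cb γA γB m n).charpoly =
      X ^ (Cb - 1) * (X - 1) * (X ^ Cb - C γA) * (X ^ Cb - C γB) := by
  classical
  set M := M0mat Cb γA γB m n with hM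
  set b : Fin Cb × Fin 3 → (Fin 3)ᵒᵈ := fun q => OrderDual.toDual q.2 with hb
  have htri : M.BlockTriangular b := by
    rintro ⟨qi, qj⟩ ⟨ri, rj⟩ h
    have hlt : qj < rj := h
    simp only [hM, M0mat]
    split
    · fin_cases qj <;> fin_cases rj <;>
        simp_all [M1blk, M2blk, MCblk, Matrix.vecHead, Matrix.vecTail] <;>
        (try split) <;> (try split) <;> simp [M1blk, M2blk, MCblk, Matrix.vecHead, Matrix.vecTail]
    · split
      · exact Matrix.one_apply_ne (fun hh => absurd hh (ne_of_lt hlt))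
      · rfl
  rw [htri.charpoly]
  have himg : Finset.image b Finset.univ = Finset.univ := by
    apply Finset.eq_univ_of_forall
    intro a
    refine Finset.mem_image.mpr ⟨(⟨0, by omega⟩, OrderDual.ofDual a), Finset.mem_univ _, rfl⟩
  rw [himg]
  -- identify each diagonal block
  have hblk : ∀ (j : Fin 3) (N : Matrix (Fin Cb) (Fin Cb) ℝ)
      (hN : ∀ i i' : Fin Cb, M (i, j) (i', j) = N i i'),
      (M.toSquareBlock b (OrderDual.toDual j)).charpoly = N.charpoly := by
    intro j N hN
    let e : Fin Cb ≃ {q : Fin Cb × Fin 3 // b q = OrderDual.toDual j} :=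
      { toFun := fun i => ⟨(i, j), rfl⟩
        invFun := fun q => q.1.1
        left_inv := fun i => rfl
        right_inv := by
          rintro ⟨⟨i, j'⟩, hq⟩
          have : j' = j := hq
          subst this
          rfl }
    have : M.toSquareBlock b (OrderDual.toDual j) = Matrix.reindex e e N := by
      ext q r
      obtain ⟨⟨i, j'⟩, hq⟩ := q
      obtain ⟨⟨i', j''⟩, hr⟩ := r
      have hj' : j' = j := hq
      have hj'' : j'' = j := hr
      subst hj' hj''
      simp only [Matrix.toSquareBlock_def, Matrix.reindex_apply, Matrix.submatrix_apply]
      exact hN i i'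
    rw [this, Matrix.charpoly_reindex]
  have h0 : (M.toSquareBlock b (OrderDual.toDual (0 : Fin 3))).charpoly
      = (cMat Cb γA).charpoly := by
    apply hblk
    intro i i'
    have hc1 : ¬ (Cb - 1 = 0) := by omega
    have hc2 : ¬ ((0:ℕ) = Cb - 1) := by omega
    have h0i : ¬ ((0:ℕ) = (i':ℕ) + 1) := by omega
    simp only [hM, M0mat, cMat]
    rcases eq_or_ne (i : ℕ) 0 with h | h
    · simp only [h, if_pos rfl]
      rcases eq_or_ne (i' : ℕ) 0 with h' | h'
      · simp [h', hc1, hc2, h0i, M1blk, Matrix.vecHead, Matrix.vecTail]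
      · rcases eq_or_ne (i' : ℕ) (Cb - 1) with h'' | h''
        · simp [h', h'', hc1, h0i, MCblk, Matrix.vecHead, Matrix.vecTail]
        · simp [h', h'', h0i, M2blk, Matrix.vecHead, Matrix.vecTail]
    · simp only [h, if_neg (by omega : ¬ ((i:ℕ) = 0 ∧ (i':ℕ) = Cb - 1))]
      simp [h, Matrix.one_apply]
  have h1 : (M.toSquareBlock b (OrderDual.toDual (1 : Fin 3))).charpoly
      = (pMat (R := ℝ) Cb).charpoly := by
    apply hblk
    intro i i'
    have hc1 : ¬ (Cb - 1 = 0) := by omega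
    simp only [hM, M0mat, pMat]
    rcases eq_or_ne (i : ℕ) 0 with h | h
    · simp only [h, if_pos rfl]
      rcases eq_or_ne (i' : ℕ) 0 with h' | h'
      · simp [h', hc1, M1blk, Matrix.vecHead, Matrix.vecTail]
      · rcases eq_or_ne (i' : ℕ) (Cb - 1) with h'' | h''
        · simp [h', h'', hc1, MCblk, Matrix.vecHead, Matrix.vecTail]
        · simp [h', h'', M2blk, Matrix.vecHead, Matrix.vecTail]
    · simp [h, Matrix.one_apply]
  have h2 : (M.toSquareBlock b (OrderDual.toDual (2 : Fin 3))).charpoly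
      = (cMat Cb γB).charpoly := by
    apply hblk
    intro i i'
    have hc1 : ¬ (Cb - 1 = 0) := by omega
    have hc2 : ¬ ((0:ℕ) = Cb - 1) := by omega
    have h0i : ¬ ((0:ℕ) = (i':ℕ) + 1) := by omega
    simp only [hM, M0mat, cMat]
    rcases eq_or_ne (i : ℕ) 0 with h | h
    · simp only [h, if_pos rfl]
      rcases eq_or_ne (i' : ℕ) 0 with h' | h'
      · simp [h', hc1, hc2, h0i, M1blk, Matrix.vecHead, Matrix.vecTail]
      · rcases eq_or_ne (i' : ℕ) (Cb - 1) with h'' | h''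
        · simp [h', h'', hc1, h0i, MCblk, Matrix.vecHead, Matrix.vecTail]
        · simp [h', h'', h0i, M2blk, Matrix.vecHead, Matrix.vecTail]
    · simp only [h, if_neg (by omega : ¬ ((i:ℕ) = 0 ∧ (i':ℕ) = Cb - 1))]
      simp [h, Matrix.one_apply]
  have hsum : ∏ a : (Fin 3)ᵒᵈ, (M.toSquareBlock b a).charpoly
      = ∏ j : Fin 3, (M.toSquareBlock b (OrderDual.toDual j)).charpoly :=
    Fintype.prod_equiv (OrderDual.toDual (α := Fin 3)).symm _ _ (fun a => rfl)
  rw [hsum, Fin.prod_univ_three, h0, h1, h2,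
    cMat_charpoly Cb hCb γA, cMat_charpoly Cb hCb γB, pMat_charpoly Cb (by omega)]
  ring
end

section
/- Let C̄ ≥ 2 and n ≥ 1 be integers, m an arbitrary real, and γ_A, γ_B ∈ (0,1). Then the spectral radius of the 3C̄×3C̄ matrix M^0 defined in the context equals 1 (every complex eigenvalue has modulus ≤ 1 and 1 is an eigenvalue), and the eigenvalue λ = 1 is simple, i.e., it is a root of the characteristic polynomial of M^0 of algebraic multiplicity one. -/
open Matrix

/-!
Grouping the coordinates by their position inside the 3-blocks, `M^0` is block lower triangular,
so its characteristic polynomial is the product of those of the three `C̄ × C̄` diagonal blocks.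
Each block is a companion matrix (a first row, ones on the subdiagonal), with characteristic
polynomials `X^C̄ - γ_A`, `X^(C̄-1) (X - 1)` and `X^C̄ - γ_B`. The roots of the outer factors
have modulus `γ^(1/C̄) < 1`, and `1` is a simple root of the middle one and no root of the others.
-/

open Polynomial

variable {R : Type*} [CommRing R]

def sndFiberEquiv (ι : Type*) {κ : Type*} (a : κ) : ι ≃ {q : ι × κ // q.2 = a} where
  toFun i := ⟨(i, a), rfl⟩
  invFun q := q.1.1
  left_inv _ := rfl
  right_inv := by rintro ⟨⟨i, _⟩, rfl⟩; rfl

theorem Matrix.charpoly_eq_prod_of_lowerTriangular_snd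
    {ι κ : Type*} [Fintype ι] [DecidableEq ι] [Fintype κ] [DecidableEq κ] [LinearOrder κ]
    (M : Matrix (ι × κ) (ι × κ) R) (h : ∀ p q : ι × κ, p.2 < q.2 → M p q = 0) :
    M.charpoly = ∏ a : κ, (M.submatrix (·, a) (·, a)).charpoly := by
  have hblock (a : κ) : Mᵀ.toSquareBlock Prod.snd a =
      reindex (sndFiberEquiv ι a) (sndFiberEquiv ι a) (M.submatrix (·, a) (·, a))ᵀ := by
    ext ⟨⟨i, b⟩, hb⟩ ⟨⟨j, c⟩, hc⟩
    dsimp only at hb hc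
    subst hb hc
    rfl
  have htri : Mᵀ.BlockTriangular Prod.snd := fun p q hlt => h q p hlt
  rw [← charpoly_transpose, charpoly, htri.charmatrix.det_fintype]
  simp_rw [← charmatrix_toSquareBlock, hblock]
  exact Finset.prod_congr rfl fun a _ => (charpoly_reindex _ _).trans (charpoly_transpose _)

def bidiagonalWithRow {k : ℕ} (x : R) (v : Fin (k + 1) → R) :
    Matrix (Fin (k + 1)) (Fin (k + 1)) R :=
  of fun i j => if i = 0 then v j else if i = j then x else if (i : ℕ) = j + 1 then -1 else 0

-- Laplace expansion along the first column: the two nonzero entries give minors of the same shape.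
theorem det_bidiagonalWithRow {k : ℕ} (x : R) (v : Fin (k + 1) → R) :
    (bidiagonalWithRow x v).det = ∑ j, v j * x ^ (k - j) := by
  induction k with
  | zero => simp [bidiagonalWithRow]
  | succ k ih =>
    set A := bidiagonalWithRow x v
    have hminor_zero : A.submatrix Fin.succ Fin.succ = bidiagonalWithRow x (Pi.single 0 x) := by
      ext i j
      cases i using Fin.cases
      · have h1 : (1 : Fin (k + 2)) = j.succ ↔ j = 0 := by
          rw [← Fin.succ_zero_eq_one, Fin.succ_inj, eq_comm]
        simp [A, bidiagonalWithRow, Pi.single_apply, h1]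
      · simp [A, bidiagonalWithRow, Fin.succ_ne_zero]
    have hminor_one : A.submatrix (Fin.succAbove 1) Fin.succ =
        bidiagonalWithRow x (Fin.tail v) := by
      ext i j
      cases i using Fin.cases <;> simp [A, bidiagonalWithRow, Fin.tail, Fin.succ_ne_zero]
    have hcol (i : Fin k) : A i.succ.succ 0 = 0 := by
      simp [A, bidiagonalWithRow, Fin.succ_ne_zero]
    rw [det_succ_column_zero, Fin.sum_univ_succ, Fin.sum_univ_succ]
    simp only [hcol, Fin.succAbove_zero, Fin.succ_zero_eq_one, hminor_zero, hminor_one, ih,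
      mul_zero, zero_mul, Finset.sum_const_zero, add_zero]
    rw [Fin.sum_univ_succ (n := k + 1)]
    simp [A, bidiagonalWithRow, Fin.tail, pow_succ', Pi.single_apply]

def rowCompanion {k : ℕ} (a : Fin (k + 1) → R) : Matrix (Fin (k + 1)) (Fin (k + 1)) R :=
  of fun i j => if i = 0 then a j else if (i : ℕ) = j + 1 then 1 else 0

theorem charmatrix_rowCompanion {k : ℕ} (a : Fin (k + 1) → R) :
    charmatrix (rowCompanion a) =
      bidiagonalWithRow X (fun j => (if j = 0 then X else 0) - C (a j)) := by
  ext i j : 1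
  by_cases hij : i = j
  · subst hij
    by_cases hi : i = 0 <;> simp [rowCompanion, bidiagonalWithRow, hi]
  · rw [charmatrix_apply_ne _ _ _ hij]
    by_cases hi : i = 0
    · subst hi
      simp [rowCompanion, bidiagonalWithRow, Ne.symm hij]
    · by_cases hsub : (i : ℕ) = j + 1 <;>
        simp [rowCompanion, bidiagonalWithRow, hi, hij, hsub]

theorem charpoly_rowCompanion {k : ℕ} (a : Fin (k + 1) → R) :
    (rowCompanion a).charpoly = X ^ (k + 1) - ∑ j, C (a j) * X ^ (k - j) := by
  rw [charpoly, charmatrix_rowCompanion, det_bidiagonalWithRow]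
  simp [sub_mul, Finset.sum_sub_distrib, pow_succ']

theorem norm_le_one_of_pow_eq {𝕜 : Type*} [NormedDivisionRing 𝕜] {z w : 𝕜} {N : ℕ}
    (hN : N ≠ 0) (h : z ^ N = w) (hw : ‖w‖ ≤ 1) : ‖z‖ ≤ 1 :=
  (pow_le_one_iff_of_nonneg (norm_nonneg z) hN).mp (by rwa [← norm_pow, h])

section M0

variable (γA γB m : ℝ) (n : ℕ)

theorem M0mat_eq_zero_of_snd_lt {Cb : ℕ} {p q : Fin Cb × Fin 3} (h : p.2 < q.2) :
    M0mat Cb γA γB m n p q = 0 := by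
  obtain ⟨i, a⟩ := p
  obtain ⟨j, b⟩ := q
  fin_cases a <;> fin_cases b <;> simp only [M0mat] at h ⊢ <;> split_ifs <;>
    simp_all [M1blk, M2blk, MCblk]

theorem M0mat_submatrix_snd_eq_rowCompanion (k : ℕ) (a : Fin 3) :
    (M0mat (k + 2) γA γB m n).submatrix (·, a) (·, a) =
      rowCompanion fun j => M0mat (k + 2) γA γB m n (0, a) (j, a) := by
  ext i j
  by_cases hi : i = 0
  · simp [rowCompanion, hi]
  · have hi' : (i : ℕ) ≠ 0 := Fin.val_ne_zero_iff.mpr hi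
    simp [M0mat, rowCompanion, hi, hi']

theorem sum_M0mat_firstRow (k : ℕ) (a : Fin 3) :
    ∑ j : Fin (k + 2), C (M0mat (k + 2) γA γB m n (0, a) (j, a)) * X ^ (k + 1 - j) =
      C (M1blk m n a a) * X ^ (k + 1) + C (MCblk γA γB m n a a) := by
  have hmid (i : Fin k) : M0mat (k + 2) γA γB m n (0, a) (i.castSucc.succ, a) = 0 := by
    have : (i : ℕ) ≠ k := i.isLt.ne
    fin_cases a <;> simp [M0mat, M2blk, this]
  rw [Fin.sum_univ_succ, Fin.sum_univ_castSucc]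
  simp only [hmid]
  simp [M0mat]

theorem charpoly_M0mat (k : ℕ) :
    (M0mat (k + 2) γA γB m n).charpoly =
      (X ^ (k + 2) - C γA) * (X ^ (k + 2) - X ^ (k + 1)) * (X ^ (k + 2) - C γB) := by
  rw [charpoly_eq_prod_of_lowerTriangular_snd _ fun _ _ => M0mat_eq_zero_of_snd_lt γA γB m n,
    Fin.prod_univ_three]
  simp [M0mat_submatrix_snd_eq_rowCompanion, charpoly_rowCompanion, sum_M0mat_firstRow, M1blk,
    MCblk]

theorem charpoly_map_ofReal_M0mat (k : ℕ) :
    ((M0mat (k + 2) γA γB m n).map Complex.ofReal).charpoly =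
      (X ^ (k + 2) - C (γA : ℂ)) * X ^ (k + 1) * (X ^ (k + 2) - C (γB : ℂ)) * (X - C 1) := by
  calc _ = (M0mat (k + 2) γA γB m n).charpoly.map Complex.ofRealHom := charpoly_map _ _
    _ = _ := by
      rw [charpoly_M0mat]
      simp
      ring

end M0

theorem stmt3_general (Cb n : ℕ) (hCb : 2 ≤ Cb) (γA γB m : ℝ)
    (hγA : γA ∈ Set.Ioo (0 : ℝ) 1) (hγB : γB ∈ Set.Ioo (0 : ℝ) 1) :
    (∀ z : ℂ, ((M0mat Cb γA γB m n).map Complex.ofReal).charpoly.IsRoot z →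
        ‖z‖ ≤ 1) ∧
      ((M0mat Cb γA γB m n).map Complex.ofReal).charpoly.IsRoot 1 ∧
      ((M0mat Cb γA γB m n).map Complex.ofReal).charpoly.rootMultiplicity 1 = 1 := by
  obtain ⟨k, rfl⟩ : ∃ k, Cb = k + 2 := ⟨Cb - 2, by omega⟩
  have hnorm {γ : ℝ} (hγ : γ ∈ Set.Ioo (0 : ℝ) 1) : ‖(γ : ℂ)‖ ≤ 1 := by
    rw [Complex.norm_real, Real.norm_of_nonneg hγ.1.le]
    exact hγ.2.le
  have hne {γ : ℝ} (hγ : γ ∈ Set.Ioo (0 : ℝ) 1) : (1 : ℂ) ≠ γ := by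
    exact_mod_cast hγ.2.ne'
  have hq1 : ¬ ((X ^ (k + 2) - C (γA : ℂ)) * X ^ (k + 1) *
      (X ^ (k + 2) - C (γB : ℂ))).IsRoot 1 := by
    simp [sub_eq_zero, hne hγA, hne hγB]
  rw [charpoly_map_ofReal_M0mat]
  refine ⟨fun z hz => ?_, by simp, ?_⟩
  · simp only [IsRoot, eval_mul, eval_pow, eval_sub, eval_X, eval_C, mul_eq_zero, sub_eq_zero]
      at hz
    rcases hz with ((hzA | hz0) | hzB) | rfl
    · exact norm_le_one_of_pow_eq (by omega) hzA (hnorm hγA)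
    · simp [pow_eq_zero_iff (Nat.succ_ne_zero k) |>.mp hz0]
    · exact norm_le_one_of_pow_eq (by omega) hzB (hnorm hγB)
    · simp
  · rw [← pow_one (X - C (1 : ℂ)),
      rootMultiplicity_mul_X_sub_C_pow (fun h => hq1 (by simp [h])), rootMultiplicity_eq_zero hq1]

/-- The spectral radius of `M^0` equals `1`: every complex eigenvalue of `M^0` has modulus
at most `1`, `1` is an eigenvalue, and `λ = 1` is a simple eigenvalue, i.e. a root of the
characteristic polynomial of algebraic multiplicity one. -/
theorem stmt3 (Cb n : ℕ) (hCb : 2 ≤ Cb) (hn : 1 ≤ n) (γA γB m : ℝ)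
    (hγA : γA ∈ Set.Ioo (0 : ℝ) 1) (hγB : γB ∈ Set.Ioo (0 : ℝ) 1) :
    (∀ z : ℂ, ((M0mat Cb γA γB m n).map Complex.ofReal).charpoly.IsRoot z →
        ‖z‖ ≤ 1) ∧
      ((M0mat Cb γA γB m n).map Complex.ofReal).charpoly.IsRoot 1 ∧
      ((M0mat Cb γA γB m n).map Complex.ofReal).charpoly.rootMultiplicity 1 = 1 :=
  stmt3_general Cb n hCb γA γB m hγA hγB
end

section
/- Let n, p ≥ 1 be integers and L > 0. Let f_1, …, f_n : ℝ^p → ℝ be differentiable with L-Lipschitz gradients, and let x* ∈ ℝ^p satisfy ∑_{i=1}^n ∇f_i(x*) = 0. Let x = (x^1,…,x^n) and s = (s^1,…,s^n) in (ℝ^p)^n, let v ∈ ℝ^n with 0 ≤ v_i ≤ 1 for all i, and let φ ∈ ℝ^n be a stochastic vector. Define y^i = v_i s^i, s̃^i = s^i − ∑_{j=1}^n v_j s^j, x̄ = ∑_{i=1}^n φ_i x^i, x̃^i = x^i − x̄, and r = (x̄−x*, …, x̄−x*) ∈ (ℝ^p)^n. If ∑_{j=1}^n v_j s^j = ∑_{j=1}^n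 ∇f_j(x^j), then ‖y‖ ≤ nL‖x̃‖ + nL‖r‖ + ‖s̃‖. -/
/-- The block ℓ₂ norm on `(ℝ^p)^n`: `‖x‖ = (∑_i ‖x^i‖₂²)^{1/2}`. -/
noncomputable def bnorm {n p : ℕ} (x : Fin n → EuclideanSpace ℝ (Fin p)) : ℝ :=
  Real.sqrt (∑ i, ‖x i‖ ^ 2)

/-!
Write `G = ∑ⱼ vⱼ sʲ`. Then `sⁱ = s̃ⁱ + G`, so `y` is obtained from `s̃ + (G, …, G)` by scaling
each block by `vᵢ ∈ [0, 1]`, and `‖y‖ ≤ ‖s̃‖ + √n ‖G‖`. Since `∑ⱼ ∇fⱼ(x*) = 0`, also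
`G = ∑ⱼ (∇fⱼ(xʲ) - ∇fⱼ(x*))`, so `‖G‖ ≤ L ∑ⱼ ‖xʲ - x*‖ ≤ L √n ‖x̃ + r‖` by Cauchy–Schwarz.
-/

open Finset

theorem norm_sum_le_mul_sum_norm_sub_of_sum_eq_zero {ι E F : Type*} [SeminormedAddCommGroup E]
    [SeminormedAddCommGroup F] (s : Finset ι) {L : ℝ} (g : ι → E → F)
    (hg : ∀ i a b, ‖g i a - g i b‖ ≤ L * ‖a - b‖) {z : E} (hz : ∑ i ∈ s, g i z = 0)
    (x : ι → E) : ‖∑ i ∈ s, g i (x i)‖ ≤ L * ∑ i ∈ s, ‖x i - z‖ := by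
  calc ‖∑ i ∈ s, g i (x i)‖ = ‖∑ i ∈ s, (g i (x i) - g i z)‖ := by
        rw [sum_sub_distrib, hz, sub_zero]
    _ ≤ ∑ i ∈ s, ‖g i (x i) - g i z‖ := norm_sum_le _ _
    _ ≤ ∑ i ∈ s, L * ‖x i - z‖ := sum_le_sum fun i _ => hg i _ _
    _ = L * ∑ i ∈ s, ‖x i - z‖ := (mul_sum _ _ _).symm

section bnorm

variable {n p : ℕ}

theorem bnorm_eq_norm_toLp (a : Fin n → EuclideanSpace ℝ (Fin p)) :
    bnorm a = ‖WithLp.toLp 2 a‖ :=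
  (PiLp.norm_eq_of_L2 _).symm

theorem bnorm_add_le (a b : Fin n → EuclideanSpace ℝ (Fin p)) :
    bnorm (a + b) ≤ bnorm a + bnorm b := by
  simp only [bnorm_eq_norm_toLp, WithLp.toLp_add]
  exact norm_add_le _ _

theorem bnorm_const (g : EuclideanSpace ℝ (Fin p)) :
    bnorm (fun _ : Fin n => g) = Real.sqrt n * ‖g‖ := by
  rw [bnorm, sum_const, card_univ, Fintype.card_fin, nsmul_eq_mul,
    Real.sqrt_mul n.cast_nonneg, Real.sqrt_sq (norm_nonneg g)]

theorem bnorm_smul_le {c : Fin n → ℝ} (hc : ∀ i, |c i| ≤ 1)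
    (a : Fin n → EuclideanSpace ℝ (Fin p)) : bnorm (fun i => c i • a i) ≤ bnorm a := by
  refine Real.sqrt_le_sqrt (sum_le_sum fun i _ => ?_)
  rw [norm_smul, Real.norm_eq_abs]
  gcongr
  exact mul_le_of_le_one_left (norm_nonneg _) (hc i)

theorem sum_norm_le_sqrt_mul_bnorm (a : Fin n → EuclideanSpace ℝ (Fin p)) :
    ∑ i, ‖a i‖ ≤ Real.sqrt n * bnorm a := by
  have hcs := sq_sum_le_card_mul_sum_sq (s := univ) (f := fun i => ‖a i‖)
  rw [card_univ, Fintype.card_fin] at hcs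
  rw [bnorm, ← Real.sqrt_mul n.cast_nonneg]
  exact Real.le_sqrt_of_sq_le hcs

end bnorm

theorem stmt6_general (n p : ℕ) (L : ℝ) (hL : 0 < L)
    (f : Fin n → EuclideanSpace ℝ (Fin p) → ℝ)
    (hlip : ∀ i x y, ‖gradient (f i) x - gradient (f i) y‖ ≤ L * ‖x - y‖)
    (xstar : EuclideanSpace ℝ (Fin p))
    (hopt : ∑ i, gradient (f i) xstar = 0)
    (x s : Fin n → EuclideanSpace ℝ (Fin p))
    (v : Fin n → ℝ) (hv : ∀ i, 0 ≤ v i ∧ v i ≤ 1)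
    (y : Fin n → EuclideanSpace ℝ (Fin p)) (hy : ∀ i, y i = v i • s i)
    (stld : Fin n → EuclideanSpace ℝ (Fin p))
    (hstld : ∀ i, stld i = s i - ∑ j, v j • s j)
    (xbar : EuclideanSpace ℝ (Fin p))
    (xtld : Fin n → EuclideanSpace ℝ (Fin p)) (hxtld : ∀ i, xtld i = x i - xbar)
    (r : Fin n → EuclideanSpace ℝ (Fin p)) (hr : ∀ i, r i = xbar - xstar)
    (hvs : ∑ j, v j • s j = ∑ j, gradient (f j) (x j)) :
    bnorm y ≤ n * L * bnorm xtld + n * L * bnorm r + bnorm stld := by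
  set G := ∑ j, v j • s j
  have hy_eq : y = fun i => v i • (stld i + G) := by
    funext i
    simp [hy, hstld]
  have hx_eq : (fun j => x j - xstar) = xtld + r := by
    funext j
    simp [hxtld, hr]
  have hG : ‖G‖ ≤ L * (Real.sqrt n * (bnorm xtld + bnorm r)) := by
    rw [hvs]
    refine (norm_sum_le_mul_sum_norm_sub_of_sum_eq_zero _ _ hlip hopt x).trans ?_
    gcongr
    calc ∑ j, ‖x j - xstar‖ ≤ Real.sqrt n * bnorm (fun j => x j - xstar) :=
          sum_norm_le_sqrt_mul_bnorm _
      _ ≤ Real.sqrt n * (bnorm xtld + bnorm r) := by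
          rw [hx_eq]
          gcongr
          exact bnorm_add_le _ _
  have hsqrt : Real.sqrt n * Real.sqrt n = n := Real.mul_self_sqrt n.cast_nonneg
  calc bnorm y ≤ bnorm (stld + fun _ => G) := by
        rw [hy_eq]
        exact bnorm_smul_le (fun i => abs_le.2 ⟨by linarith [(hv i).1], (hv i).2⟩) _
    _ ≤ bnorm stld + Real.sqrt n * ‖G‖ := (bnorm_add_le _ _).trans_eq (by rw [bnorm_const])
    _ ≤ bnorm stld + Real.sqrt n * (L * (Real.sqrt n * (bnorm xtld + bnorm r))) := by gcongr
    _ = n * L * bnorm xtld + n * L * bnorm r + bnorm stld := by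
        linear_combination L * (bnorm xtld + bnorm r) * hsqrt

/-- Bound on the scaled gradient-tracking variable:
`‖y‖ ≤ nL‖x̃‖ + nL‖r‖ + ‖s̃‖`. -/
theorem stmt6 (n p : ℕ) (hn : 1 ≤ n) (hp : 1 ≤ p) (L : ℝ) (hL : 0 < L)
    (f : Fin n → EuclideanSpace ℝ (Fin p) → ℝ)
    (hdiff : ∀ i, Differentiable ℝ (f i))
    (hlip : ∀ i x y, ‖gradient (f i) x - gradient (f i) y‖ ≤ L * ‖x - y‖)
    (xstar : EuclideanSpace ℝ (Fin p))
    (hopt : ∑ i, gradient (f i) xstar = 0)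
    (x s : Fin n → EuclideanSpace ℝ (Fin p))
    (v : Fin n → ℝ) (hv : ∀ i, 0 ≤ v i ∧ v i ≤ 1)
    (φ : Fin n → ℝ) (hφnn : ∀ i, 0 ≤ φ i) (hφ1 : ∑ i, φ i = 1)
    (y : Fin n → EuclideanSpace ℝ (Fin p)) (hy : ∀ i, y i = v i • s i)
    (stld : Fin n → EuclideanSpace ℝ (Fin p))
    (hstld : ∀ i, stld i = s i - ∑ j, v j • s j)
    (xbar : EuclideanSpace ℝ (Fin p)) (hxbar : xbar = ∑ i, φ i • x i)
    (xtld : Fin n → EuclideanSpace ℝ (Fin p)) (hxtld : ∀ i, xtld i = x i - xbar)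
    (r : Fin n → EuclideanSpace ℝ (Fin p)) (hr : ∀ i, r i = xbar - xstar)
    (hvs : ∑ j, v j • s j = ∑ j, gradient (f j) (x j)) :
    bnorm y ≤ n * L * bnorm xtld + n * L * bnorm r + bnorm stld :=
  stmt6_general n p L hL f hlip xstar hopt x s v hv y hy stld hstld xbar xtld hxtld r hr hvs
end

section
/- Let n ≥ 1 and C ≥ 1 be integers and α ∈ (0,1). Let (E_k)_{k≥0} be edge sets E_k ⊆ {1,…,n}×{1,…,n} with (i,i) ∈ E_k for all i, k, such that for every k ≥ 0 the directed graph on {1,…,n} with edge set ∪_{l=k}^{k+C−1} E_l is strongly connected. Let (A_k) be row-stochastic n×n matrices with [A_k]_{ij} > 0 ⇔ (i,j) ∈ E_k and [A_k]_{ij} ≥ α whenever (i,j) ∈ E_k. Define D_s = A_{sC+C−1} A_{sC+C−2} ⋯ A_{sC} for s ≥ 0. Then there exist δ ∈ (0,1), a sequence of stochastic vectors (μ_s)_{s≥0} in ℝ^n with [μ_s]_i ≥ δ for all i and s and μ_sᵀ = μ_{s+1}ᵀ D_s for all s, and constants 𝓜 > 0 and q ∈ (0,1), such that for all t ≥ s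 ≥ 0, max_{i,j} |[D_t D_{t−1} ⋯ D_s − 1_n μ_sᵀ]_{ij}| ≤ 𝓜 q^{t−s}. -/
open Matrix

noncomputable def bprod {n : ℕ} (A : ℕ → Matrix (Fin n) (Fin n) ℝ) (lo hi : ℕ) :
    Matrix (Fin n) (Fin n) ℝ :=
  (((List.range (hi + 1 - lo)).map fun t => A (lo + t)).reverse).prod

def StronglyConnected {n : ℕ} (E : Set (Fin n × Fin n)) : Prop :=
  ∀ i j : Fin n, i ≠ j → Relation.TransGen (fun a b => (b, a) ∈ E) j i

namespace S10
variable {n : ℕ}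

lemma bprod_empty (X : ℕ → Matrix (Fin n) (Fin n) ℝ) (lo hi : ℕ) (h : hi + 1 ≤ lo) :
    bprod X lo hi = 1 := by
  unfold bprod
  rw [Nat.sub_eq_zero_of_le h]
  simp

lemma bprod_succ (X : ℕ → Matrix (Fin n) (Fin n) ℝ) (lo hi : ℕ) (h : lo ≤ hi + 1) :
    bprod X lo (hi + 1) = X (hi + 1) * bprod X lo hi := by
  unfold bprod
  have h1 : hi + 1 + 1 - lo = (hi + 1 - lo) + 1 := by omega
  rw [h1, List.range_succ, List.map_append, List.reverse_append, List.prod_append]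
  simp only [List.map_cons, List.map_nil, List.reverse_cons, List.reverse_nil,
    List.nil_append, List.prod_cons, List.prod_nil, List.singleton_append, List.prod_cons]
  have h2 : lo + (hi + 1 - lo) = hi + 1 := by omega
  rw [h2, mul_one]

lemma bprod_self (X : ℕ → Matrix (Fin n) (Fin n) ℝ) (lo : ℕ) : bprod X lo lo = X lo := by
  cases lo with
  | zero => unfold bprod; simp [List.range_succ]
  | succ m =>
    rw [bprod_succ X (m+1) m (le_refl _), bprod_empty X (m+1) m (le_refl _), mul_one]

lemma bprod_split (X : ℕ → Matrix (Fin n) (Fin n) ℝ) (lo m : ℕ) :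
    ∀ t, m ≤ t → lo ≤ m + 1 →
      bprod X lo t = bprod X (m + 1) t * bprod X lo m := by
  intro t
  induction t with
  | zero =>
    intro h1 h2
    have : m = 0 := by omega
    subst this
    rw [bprod_empty X 1 0 le_rfl, one_mul]
  | succ t ih =>
    intro h1 h2
    rcases Nat.lt_or_ge m (t+1) with h | h
    · rw [bprod_succ X lo t (by omega), bprod_succ X (m+1) t (by omega),
        ih (by omega) h2, mul_assoc]
    · have : m = t + 1 := by omega
      subst this
      rw [bprod_empty X (t+1+1) (t+1) le_rfl, one_mul]


/-- row-stochastic -/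
def RS (P : Matrix (Fin n) (Fin n) ℝ) : Prop :=
  (∀ i j, 0 ≤ P i j) ∧ ∀ i, ∑ j, P i j = 1

lemma RS_one : RS (1 : Matrix (Fin n) (Fin n) ℝ) := by
  constructor
  · intro i j
    by_cases h : i = j <;> simp [Matrix.one_apply, h]
  · intro i
    simp [Matrix.one_apply]

lemma RS_mul {P Q : Matrix (Fin n) (Fin n) ℝ} (hP : RS P) (hQ : RS Q) : RS (P * Q) := by
  constructor
  · intro i j
    rw [Matrix.mul_apply]
    exact Finset.sum_nonneg fun m _ => mul_nonneg (hP.1 i m) (hQ.1 m j)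
  · intro i
    simp only [Matrix.mul_apply]
    rw [Finset.sum_comm]
    calc ∑ m, ∑ j, P i m * Q m j = ∑ m, P i m * ∑ j, Q m j := by
          simp [Finset.mul_sum]
      _ = 1 := by simp [hQ.2, hP.2 i]

lemma RS_entry_le_one {P : Matrix (Fin n) (Fin n) ℝ} (hP : RS P) (i j : Fin n) :
    P i j ≤ 1 := by
  rw [← hP.2 i]
  exact Finset.single_le_sum (fun m _ => hP.1 i m) (Finset.mem_univ j)

section NZ
variable [NeZero n]

noncomputable def cInf (P : Matrix (Fin n) (Fin n) ℝ) (j : Fin n) : ℝ :=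
  Finset.univ.inf' Finset.univ_nonempty (fun i => P i j)

noncomputable def cSup (P : Matrix (Fin n) (Fin n) ℝ) (j : Fin n) : ℝ :=
  Finset.univ.sup' Finset.univ_nonempty (fun i => P i j)

lemma cInf_le (P : Matrix (Fin n) (Fin n) ℝ) (i j : Fin n) : cInf P j ≤ P i j :=
  Finset.inf'_le _ (Finset.mem_univ i)

lemma le_cSup (P : Matrix (Fin n) (Fin n) ℝ) (i j : Fin n) : P i j ≤ cSup P j :=
  Finset.le_sup' (fun i => P i j) (Finset.mem_univ i)

lemma cInf_nonneg (P : Matrix (Fin n) (Fin n) ℝ) (hP : RS P) (j : Fin n) : 0 ≤ cInf P j :=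
  Finset.le_inf' _ _ fun i _ => hP.1 i j

lemma cSup_le_one (P : Matrix (Fin n) (Fin n) ℝ) (hP : RS P) (j : Fin n) : cSup P j ≤ 1 :=
  Finset.sup'_le _ _ fun i _ => RS_entry_le_one hP i j

lemma cInf_le_cSup (P : Matrix (Fin n) (Fin n) ℝ) (j : Fin n) : cInf P j ≤ cSup P j := by
  obtain ⟨i⟩ := (inferInstance : Nonempty (Fin n))
  exact le_trans (cInf_le P i j) (le_cSup P i j)

/-- A stochastic left-multiplication keeps column entries in the column interval. -/
lemma mul_entry_le_cSup {S P : Matrix (Fin n) (Fin n) ℝ} (hS : RS S) (i j : Fin n) :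
    (S * P) i j ≤ cSup P j := by
  rw [Matrix.mul_apply]
  calc ∑ m, S i m * P m j ≤ ∑ m, S i m * cSup P j :=
        Finset.sum_le_sum fun m _ => mul_le_mul_of_nonneg_left (le_cSup P m j) (hS.1 i m)
    _ = cSup P j := by rw [← Finset.sum_mul, hS.2 i, one_mul]

lemma cInf_le_mul_entry {S P : Matrix (Fin n) (Fin n) ℝ} (hS : RS S) (i j : Fin n) :
    cInf P j ≤ (S * P) i j := by
  rw [Matrix.mul_apply]
  calc cInf P j = ∑ m, S i m * cInf P j := by rw [← Finset.sum_mul, hS.2 i, one_mul]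
    _ ≤ ∑ m, S i m * P m j :=
        Finset.sum_le_sum fun m _ => mul_le_mul_of_nonneg_left (cInf_le P m j) (hS.1 i m)

lemma cSup_mul_le {S P : Matrix (Fin n) (Fin n) ℝ} (hS : RS S) (j : Fin n) :
    cSup (S * P) j ≤ cSup P j :=
  Finset.sup'_le _ _ fun i _ => mul_entry_le_cSup hS i j

lemma cInf_le_mul {S P : Matrix (Fin n) (Fin n) ℝ} (hS : RS S) (j : Fin n) :
    cInf P j ≤ cInf (S * P) j :=
  Finset.le_inf' _ _ fun i _ => cInf_le_mul_entry hS i j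

/-- Contraction of the column oscillation under a stochastic matrix with entries ≥ ε. -/
lemma osc_contract {S P : Matrix (Fin n) (Fin n) ℝ} (hS : RS S) {ε : ℝ}
    (hε : ∀ i j, ε ≤ S i j) (j : Fin n) :
    cSup (S * P) j - cInf (S * P) j ≤ (1 - ε) * (cSup P j - cInf P j) := by
  obtain ⟨m0, _, hm0⟩ := Finset.exists_mem_eq_inf' (Finset.univ_nonempty (α := Fin n))
    (fun i => P i j)
  have hba : 0 ≤ cSup P j - cInf P j := sub_nonneg.2 (cInf_le_cSup P j)
  have key : ∀ i, (S * P) i j ≤ cSup P j - ε * (cSup P j - cInf P j) := by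
    intro i
    rw [Matrix.mul_apply]
    have h1 : ∑ m, S i m * P m j
        = S i m0 * P m0 j + ∑ m ∈ Finset.univ.erase m0, S i m * P m j := by
      rw [← Finset.add_sum_erase _ _ (Finset.mem_univ m0)]
    have h2 : ∑ m ∈ Finset.univ.erase m0, S i m * P m j
        ≤ ∑ m ∈ Finset.univ.erase m0, S i m * cSup P j :=
      Finset.sum_le_sum fun m _ => mul_le_mul_of_nonneg_left (le_cSup P m j) (hS.1 i m)
    have h3 : ∑ m ∈ Finset.univ.erase m0, S i m = 1 - S i m0 := by
      have := hS.2 i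
      rw [← Finset.add_sum_erase _ _ (Finset.mem_univ m0)] at this
      linarith
    have h4 : ∑ m ∈ Finset.univ.erase m0, S i m * cSup P j = (1 - S i m0) * cSup P j := by
      rw [← Finset.sum_mul, h3]
    have h5 : S i m0 * P m0 j = S i m0 * cInf P j := by rw [← hm0]; rfl
    have h6 : ε ≤ S i m0 := hε i m0
    calc ∑ m, S i m * P m j ≤ S i m0 * cInf P j + (1 - S i m0) * cSup P j := by
          rw [h1, h5]; linarith [h2.trans_eq h4]
      _ = cSup P j - S i m0 * (cSup P j - cInf P j) := by ring
      _ ≤ cSup P j - ε * (cSup P j - cInf P j) := by nlinarith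
  have hsup : cSup (S * P) j ≤ cSup P j - ε * (cSup P j - cInf P j) :=
    Finset.sup'_le _ _ fun i _ => key i
  have hinf : cInf P j ≤ cInf (S * P) j := cInf_le_mul hS j
  linarith


lemma osc_le_one {P : Matrix (Fin n) (Fin n) ℝ} (hP : RS P) (j : Fin n) :
    cSup P j - cInf P j ≤ 1 := by
  have := cSup_le_one P hP j
  have := cInf_nonneg P hP j
  linarith

end NZ

lemma RS_bprod (X : ℕ → Matrix (Fin n) (Fin n) ℝ) (hX : ∀ k, RS (X k)) (lo hi : ℕ) :
    RS (bprod X lo hi) := by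
  induction hi with
  | zero =>
    rcases Nat.eq_zero_or_pos lo with h | h
    · subst h; rw [bprod_self]; exact hX 0
    · rw [bprod_empty X lo 0 h]; exact RS_one
  | succ t ih =>
    by_cases h : lo ≤ t + 1
    · rw [bprod_succ X lo t h]; exact RS_mul (hX _) ih
    · rw [bprod_empty X lo (t+1) (by omega)]; exact RS_one

lemma cross {V : Type*} (r : V → V → Prop) (S : Set V) :
    ∀ x y, Relation.TransGen r x y → x ∈ S → y ∉ S →
      ∃ u ∈ S, ∃ v, v ∉ S ∧ r u v := by
  intro x y h
  induction h with
  | single h' => exact fun hx hy => ⟨x, hx, _, hy, h'⟩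
  | @tail b c _ hbc ih =>
    intro hx hy
    by_cases hb : b ∈ S
    · exact ⟨b, hb, c, hy, hbc⟩
    · exact ih hx hb

/-- Positivity of aligned products of length `n*C`. -/
lemma pos_block {n C : ℕ} (hn : 1 ≤ n) (hC : 1 ≤ C)
    {α : ℝ} (hα : α ∈ Set.Ioo (0 : ℝ) 1)
    (E : ℕ → Set (Fin n × Fin n))
    (hself : ∀ k (i : Fin n), (i, i) ∈ E k)
    (hconn : ∀ k, ∀ i j : Fin n, i ≠ j →
      Relation.TransGen (fun a b => (b, a) ∈ ⋃ l ∈ Finset.Icc k (k + C - 1), E l) j i)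
    (A : ℕ → Matrix (Fin n) (Fin n) ℝ)
    (hAnn : ∀ k i j, 0 ≤ A k i j) (hArow : ∀ k i, ∑ j, A k i j = 1)
    (hAα : ∀ k i j, (i, j) ∈ E k → α ≤ A k i j) :
    ∀ k (i j : Fin n), α ^ (n * C) ≤ bprod A k (k + n * C - 1) i j := by
  intro k i j
  have hRSA : ∀ l, RS (A l) := fun l => ⟨hAnn l, hArow l⟩
  have hRSQ : ∀ p, RS (bprod A k (k + p)) := fun p => RS_bprod A hRSA k (k + p)
  -- Q p := bprod A k (k+p)
  -- step lemma along an edge at time k+p+1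
  have P1 : ∀ (p : ℕ) (u v : Fin n), (v, u) ∈ E (k + p + 1) →
      A (k + p + 1) v u * bprod A k (k + p) u j ≤ bprod A k (k + (p + 1)) v j := by
    intro p u v _
    have he : k + (p + 1) = (k + p) + 1 := by omega
    rw [he, bprod_succ A k (k + p) (by omega), Matrix.mul_apply]
    exact Finset.single_le_sum
      (f := fun m => A (k + p + 1) v m * bprod A k (k + p) m j)
      (fun m _ => mul_nonneg (hAnn _ v m) ((hRSQ p).1 m j)) (Finset.mem_univ u)
  -- diagonal propagation
  have P2 : ∀ (p : ℕ) (u : Fin n), α ^ (p + 1) ≤ bprod A k (k + p) u j →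
      ∀ ρ, p ≤ ρ → α ^ (ρ + 1) ≤ bprod A k (k + ρ) u j := by
    intro p u hp ρ hρ
    induction ρ with
    | zero =>
      have : p = 0 := by omega
      subst this; exact hp
    | succ t ih =>
      rcases Nat.lt_or_ge t p with h | h
      · have : p = t + 1 := by omega
        subst this; exact hp
      · have h1 : α ^ (t + 1) ≤ bprod A k (k + t) u j := ih h
        have h2 := P1 t u u (hself (k + t + 1) u)
        have h3 : α ≤ A (k + t + 1) u u := hAα _ u u (hself _ u)
        calc α ^ (t + 1 + 1) = α * α ^ (t + 1) := by ring
          _ ≤ A (k + t + 1) u u * bprod A k (k + t) u j := by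
              apply mul_le_mul h3 h1 (pow_nonneg hα.1.le _) ((hRSA _).1 u u)
          _ ≤ bprod A k (k + (t + 1)) u j := h2
  -- the reachable set
  set T : ℕ → Finset (Fin n) :=
    fun p => Finset.univ.filter (fun i => α ^ (p + 1) ≤ bprod A k (k + p) i j) with hT
  have hTmem : ∀ p u, u ∈ T p ↔ α ^ (p + 1) ≤ bprod A k (k + p) u j := by
    intro p u; simp [hT]
  have hTmono : ∀ p q, p ≤ q → T p ⊆ T q := by
    intro p q hpq u hu
    exact (hTmem q u).2 (P2 p u ((hTmem p u).1 hu) q hpq)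
  have grow : ∀ m, min n (m + 1) ≤ (T (m * C)).card := by
    intro m
    induction m with
    | zero =>
      have hj : j ∈ T 0 := by
        rw [hTmem]
        simpa [bprod_self] using hAα k j j (hself k j)
      have := Finset.card_pos.2 ⟨j, hj⟩
      simp only [Nat.zero_mul]
      omega
    | succ m ih =>
      by_cases hu : T (m * C) = Finset.univ
      · have : T ((m + 1) * C) = Finset.univ :=
          Finset.univ_subset_iff.1 (hu ▸ hTmono (m * C) ((m + 1) * C)
            (Nat.mul_le_mul_right C (Nat.le_succ m)))
        rw [this, Finset.card_univ, Fintype.card_fin]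
        omega
      · have hcard_lt : (T (m * C)).card < n := by
          rcases Nat.lt_or_ge (T (m * C)).card n with h | h
          · exact h
          · exfalso
            apply hu
            apply Finset.eq_univ_of_card
            have := Finset.card_le_univ (T (m * C))
            simp only [Finset.card_univ, Fintype.card_fin] at this ⊢
            omega
        obtain ⟨y, hy⟩ : ∃ y, y ∉ T (m * C) := by
          by_contra h; push_neg at h; exact hu (Finset.eq_univ_of_forall h)
        obtain ⟨x, hx⟩ : ∃ x, x ∈ T (m * C) := by
          have : 0 < (T (m * C)).card := by omega
          obtain ⟨x, hx⟩ := Finset.card_pos.1 this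
          exact ⟨x, hx⟩
        have hxy : y ≠ x := fun h => hy (h ▸ hx)
        have hpath := hconn (k + m * C + 1) y x hxy
        obtain ⟨u, hu', v, hv', huv⟩ :=
          cross _ (↑(T (m * C)) : Set (Fin n)) x y hpath
            (by exact_mod_cast hx) (by exact_mod_cast hy)
        have hu2 : u ∈ T (m * C) := by exact_mod_cast hu'
        have hv2 : v ∉ T (m * C) := fun h => hv' (by exact_mod_cast h)
        simp only [Set.mem_iUnion] at huv
        obtain ⟨l, hl, hvl⟩ := huv
        rw [Finset.mem_Icc] at hl
        have hl1 : k + m * C + 1 ≤ l := hl.1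
        have hl2 : l ≤ k + m * C + C := by omega
        set p : ℕ := l - k - 1 with hp
        have hlp : l = k + p + 1 := by omega
        have hpmC : m * C ≤ p := by omega
        have hpC : p + 1 ≤ (m + 1) * C := by
          have : (m + 1) * C = m * C + C := by ring
          omega
        have hqu : α ^ (p + 1) ≤ bprod A k (k + p) u j :=
          P2 (m * C) u ((hTmem _ u).1 hu2) p hpmC
        have hedge : α ≤ A (k + p + 1) v u := hlp ▸ hAα l v u hvl
        have hstep : α ^ (p + 1 + 1) ≤ bprod A k (k + (p + 1)) v j := by
          calc α ^ (p + 1 + 1) = α * α ^ (p + 1) := by ring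
            _ ≤ A (k + p + 1) v u * bprod A k (k + p) u j :=
                mul_le_mul hedge hqu (pow_nonneg hα.1.le _) ((hRSA _).1 v u)
            _ ≤ bprod A k (k + (p + 1)) v j := P1 p u v (hlp ▸ hvl)
        have hvT : v ∈ T ((m + 1) * C) :=
          hTmono (p + 1) ((m + 1) * C) hpC ((hTmem (p + 1) v).2 hstep)
        have hsub : insert v (T (m * C)) ⊆ T ((m + 1) * C) := by
          intro w hw
          rcases Finset.mem_insert.1 hw with h | h
          · subst h; exact hvT
          · exact hTmono (m * C) ((m + 1) * C) (Nat.mul_le_mul_right C (Nat.le_succ m)) h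
        have hcard : (T (m * C)).card + 1 ≤ (T ((m + 1) * C)).card := by
          have h1 := Finset.card_le_card hsub
          rw [Finset.card_insert_of_notMem hv2] at h1
          exact h1
        omega
  -- conclude
  have hfin := grow (n - 1)
  have hmin : min n (n - 1 + 1) = n := by omega
  rw [hmin] at hfin
  have huniv : T ((n - 1) * C) = Finset.univ := by
    apply Finset.eq_univ_of_card
    have := Finset.card_le_univ (T ((n - 1) * C))
    simp only [Finset.card_univ, Fintype.card_fin] at this ⊢
    omega
  have hi : i ∈ T ((n - 1) * C) := huniv ▸ Finset.mem_univ i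
  have h1 : α ^ (n * C - 1 + 1) ≤ bprod A k (k + (n * C - 1)) i j :=
    P2 ((n - 1) * C) i ((hTmem _ i).1 hi) (n * C - 1)
      (by have h := Nat.one_le_iff_ne_zero.1 hC
          have : (n - 1) * C + C = n * C := by
            cases n with
            | zero => omega
            | succ m => simp [Nat.succ_sub_one]; ring
          omega)
  have h2 : n * C - 1 + 1 = n * C := by
    have : 1 ≤ n * C := Nat.one_le_iff_ne_zero.2 (by positivity)
    omega
  have h3 : k + (n * C - 1) = k + n * C - 1 := by omega
  rw [h2, h3] at h1
  exact h1

lemma bprod_D_eq {n C : ℕ} (hC : 1 ≤ C) (A D : ℕ → Matrix (Fin n) (Fin n) ℝ)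
    (hD : ∀ s, D s = bprod A (s * C) (s * C + C - 1)) :
    ∀ σ m, bprod D σ (σ + m) = bprod A (σ * C) ((σ + m) * C + C - 1) := by
  intro σ m
  induction m with
  | zero => simpa using (bprod_self D σ).trans (hD σ)
  | succ m ih =>
    have e0 : σ + (m + 1) = (σ + m) + 1 := by omega
    rw [e0, bprod_succ D σ (σ + m) (by omega), ih, hD ((σ + m) + 1)]
    have e1 : (σ + m) * C + C - 1 + 1 = ((σ + m) + 1) * C := by
      have : ((σ + m) + 1) * C = (σ + m) * C + C := by ring
      omega
    have h3 : ((σ + m) + 1) * C = (σ + m) * C + C := by ring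
    have hsp := bprod_split A (σ * C) ((σ + m) * C + C - 1) (((σ + m) + 1) * C + C - 1)
      (by omega) (by have h2 : σ * C ≤ (σ + m) * C := Nat.mul_le_mul_right C (by omega); omega)
    rw [e1] at hsp
    exact hsp.symm

end S10

open S10 Filter in
/-- Ergodicity of the backward products of the `C`-fold products `D_s = A_{sC+C−1} ⋯ A_{sC}`:
there is an absolute probability sequence `(μ_s)` for `(D_s)` uniformly bounded below, and the
backward products `D_t ⋯ D_s` converge to `1_n μ_sᵀ` geometrically in the max norm. -/
theorem stmt10 (n C : ℕ) (hn : 1 ≤ n) (hC : 1 ≤ C)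
    (α : ℝ) (hα : α ∈ Set.Ioo (0 : ℝ) 1)
    (E : ℕ → Set (Fin n × Fin n))
    (hself : ∀ k (i : Fin n), (i, i) ∈ E k)
    (hconn : ∀ k, StronglyConnected (⋃ l ∈ Finset.Icc k (k + C - 1), E l))
    (A : ℕ → Matrix (Fin n) (Fin n) ℝ)
    (hAnn : ∀ k i j, 0 ≤ A k i j) (hArow : ∀ k i, ∑ j, A k i j = 1)
    (hAcomp : ∀ k i j, 0 < A k i j ↔ (i, j) ∈ E k)
    (hAα : ∀ k i j, (i, j) ∈ E k → α ≤ A k i j)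
    (D : ℕ → Matrix (Fin n) (Fin n) ℝ)
    (hD : ∀ s, D s = bprod A (s * C) (s * C + C - 1)) :
    ∃ δ ∈ Set.Ioo (0 : ℝ) 1, ∃ μ : ℕ → Fin n → ℝ,
      (∀ s, (∀ i, 0 ≤ μ s i) ∧ ∑ i, μ s i = 1) ∧
      (∀ s i, δ ≤ μ s i) ∧
      (∀ s, μ s = Matrix.vecMul (μ (s + 1)) (D s)) ∧
      ∃ M > (0 : ℝ), ∃ q ∈ Set.Ioo (0 : ℝ) 1,
        ∀ t s, s ≤ t → ∀ i j,
          |((bprod D s t - Matrix.vecMulVec (fun _ => 1) (μ s) : Matrix (Fin n) (Fin n) ℝ)) i j| ≤ M * q ^ (t - s) := by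
  obtain ⟨hα0, hα1⟩ := hα
  have hNZ : NeZero n := ⟨by omega⟩
  have i0 : Fin n := ⟨0, by omega⟩
  have hRSA : ∀ l, RS (A l) := fun l => ⟨hAnn l, hArow l⟩
  have hRSD : ∀ s, RS (D s) := fun s => hD s ▸ RS_bprod A hRSA _ _
  have hRSP : ∀ s t, RS (bprod D s t) := fun s t => RS_bprod D hRSD s t
  set ε : ℝ := α ^ (n * C) with hεdef
  have hnC : 1 ≤ n * C := Nat.one_le_iff_ne_zero.2 (by positivity)
  have hε0 : 0 < ε := pow_pos hα0 _
  have hε1 : ε < 1 := pow_lt_one₀ hα0.le hα1 (by omega)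
  -- positivity of blocks of n consecutive D's
  have hblock : ∀ σ (i j : Fin n), ε ≤ bprod D σ (σ + (n - 1)) i j := by
    intro σ i j
    have h1 := bprod_D_eq hC A D hD σ (n - 1)
    have h2 := pos_block hn hC ⟨hα0, hα1⟩ E hself hconn A hAnn hArow hAα (σ * C) i j
    have h3 : (σ + (n - 1)) * C + C - 1 = σ * C + n * C - 1 := by
      obtain ⟨m, rfl⟩ : ∃ m, n = m + 1 := ⟨n - 1, by omega⟩
      simp only [Nat.add_sub_cancel]
      have h4 : (σ + m) * C = σ * C + m * C := by ring
      have h5 : (m + 1) * C = m * C + C := by ring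
      omega
    rw [h1, h3]
    exact h2
  -- oscillation decay
  have osc_claim : ∀ m s t, s + m * n ≤ t + 1 → ∀ j,
      cSup (bprod D s t) j - cInf (bprod D s t) j ≤ (1 - ε) ^ m := by
    intro m
    induction m with
    | zero => intro s t _ j; simpa using osc_le_one (hRSP s t) j
    | succ m ih =>
      intro s t hst j
      have hmn : (m + 1) * n = m * n + n := by ring
      have htn : n ≤ t + 1 := by omega
      rcases Nat.lt_or_ge t n with hcase | hcase
      · -- the whole product is exactly one block
        have hs0 : s = 0 := by omega
        have hm : m = 0 := by
          rcases Nat.mul_eq_zero.1 (by omega : m * n = 0) with h | h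
          · exact h
          · omega
        subst hs0; subst hm
        have hblk2 : ∀ i j, ε ≤ bprod D 0 t i j := by
          intro i j
          have := hblock 0 i j
          have he : 0 + (n - 1) = t := by omega
          rwa [he] at this
        have hone : bprod D 0 t = bprod D 0 t * 1 := (mul_one _).symm
        rw [hone]
        calc cSup (bprod D 0 t * 1) j - cInf (bprod D 0 t * 1) j
            ≤ (1 - ε) * (cSup (1 : Matrix (Fin n) (Fin n) ℝ) j - cInf 1 j) :=
              osc_contract (RS_bprod D hRSD 0 t) hblk2 j
          _ ≤ (1 - ε) * 1 :=
              mul_le_mul_of_nonneg_left (osc_le_one RS_one j) (by linarith)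
          _ ≤ (1 - ε) ^ (0 + 1) := by simp
      · have hsplit := bprod_split D s (t - n) t (by omega) (by omega)
        have hblk : ∀ i j, ε ≤ bprod D (t - n + 1) t i j := by
          intro i j
          have := hblock (t - n + 1) i j
          have he : t - n + 1 + (n - 1) = t := by omega
          rwa [he] at this
        have hblkRS : RS (bprod D (t - n + 1) t) := RS_bprod D hRSD _ _
        rw [hsplit]
        calc cSup (bprod D (t - n + 1) t * bprod D s (t - n)) j
              - cInf (bprod D (t - n + 1) t * bprod D s (t - n)) j
            ≤ (1 - ε) * (cSup (bprod D s (t - n)) j - cInf (bprod D s (t - n)) j) :=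
              osc_contract hblkRS hblk j
          _ ≤ (1 - ε) * (1 - ε) ^ m := by
              apply mul_le_mul_of_nonneg_left (ih s (t - n) (by omega) j) (by linarith)
          _ = (1 - ε) ^ (m + 1) := by ring
  -- monotone column bounds
  have hLmono : ∀ s j, Monotone (fun t => cInf (bprod D s t) j) := by
    intro s j
    apply monotone_nat_of_le_succ
    intro t
    by_cases h : s ≤ t + 1
    · rw [bprod_succ D s t h]
      exact cInf_le_mul (hRSD (t + 1)) j
    · rw [bprod_empty D s t (by omega), bprod_empty D s (t + 1) (by omega)]
  have hUanti : ∀ s j, Antitone (fun t => cSup (bprod D s t) j) := by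
    intro s j
    apply antitone_nat_of_succ_le
    intro t
    by_cases h : s ≤ t + 1
    · rw [bprod_succ D s t h]
      exact cSup_mul_le (hRSD (t + 1)) j
    · rw [bprod_empty D s t (by omega), bprod_empty D s (t + 1) (by omega)]
  have hLU : ∀ s j t t', cInf (bprod D s t) j ≤ cSup (bprod D s t') j := by
    intro s j t t'
    calc cInf (bprod D s t) j ≤ cInf (bprod D s (max t t')) j :=
          hLmono s j (le_max_left t t')
      _ ≤ cSup (bprod D s (max t t')) j := cInf_le_cSup _ j
      _ ≤ cSup (bprod D s t') j := hUanti s j (le_max_right t t')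
  have hbdd : ∀ s j, BddAbove (Set.range fun t => cInf (bprod D s t) j) := by
    intro s j
    refine ⟨1, ?_⟩
    rintro x ⟨t, rfl⟩
    exact le_trans (cInf_le_cSup _ j) (cSup_le_one _ (hRSP s t) j)
  set μ : ℕ → Fin n → ℝ := fun s j => ⨆ t, cInf (bprod D s t) j with hμdef
  have hμ_ge : ∀ s j t, cInf (bprod D s t) j ≤ μ s j := fun s j t => le_ciSup (hbdd s j) t
  have hμ_le : ∀ s j t, μ s j ≤ cSup (bprod D s t) j := fun s j t =>
    ciSup_le fun t' => hLU s j t' t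
  -- entrywise bound for t ≥ s
  have key : ∀ s t (i j : Fin n), s ≤ t →
      |bprod D s t i j - μ s j| ≤ (1 - ε) ^ ((t + 1 - s) / n) := by
    intro s t i j hst
    have h1 := osc_claim ((t + 1 - s) / n) s t
      (by have := Nat.div_mul_le_self (t + 1 - s) n; omega) j
    have h2 := cInf_le (bprod D s t) i j
    have h3 := le_cSup (bprod D s t) i j
    have h4 := hμ_ge s j t
    have h5 := hμ_le s j t
    rw [abs_le]
    constructor <;> linarith
  -- lower bound ε ≤ μ
  have hμε : ∀ s j, ε ≤ μ s j := by
    intro s j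
    refine le_trans ?_ (hμ_ge s j (s + (n - 1)))
    exact Finset.le_inf' _ _ fun i _ => hblock s i j
  -- convergence of entries to μ
  have hpow0 : Tendsto (fun m : ℕ => (1 - ε) ^ m) atTop (nhds 0) :=
    tendsto_pow_atTop_nhds_zero_of_lt_one (by linarith) (by linarith)
  have hdiv : ∀ s, Tendsto (fun t : ℕ => (t + 1 - s) / n) atTop atTop := by
    intro s
    rw [tendsto_atTop_atTop]
    intro b
    refine ⟨s + b * n + n, fun t ht => ?_⟩
    rw [Nat.le_div_iff_mul_le (by omega)]
    omega
  have hconv : ∀ s (i j : Fin n), Tendsto (fun t => bprod D s t i j) atTop (nhds (μ s j)) := by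
    intro s i j
    rw [tendsto_iff_dist_tendsto_zero]
    apply squeeze_zero' (Eventually.of_forall fun t => dist_nonneg)
      (eventually_atTop.2 ⟨s, fun t ht => ?_⟩) ((hpow0).comp (hdiv s))
    rw [Real.dist_eq]
    exact key s t i j ht
  -- sum = 1
  have hμsum : ∀ s, ∑ j, μ s j = 1 := by
    intro s
    have h1 : Tendsto (fun t => ∑ j, bprod D s t i0 j) atTop (nhds (∑ j, μ s j)) :=
      tendsto_finset_sum _ fun j _ => hconv s i0 j
    have h2 : Tendsto (fun t : ℕ => (1 : ℝ)) atTop (nhds 1) := tendsto_const_nhds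
    have h3 : (fun t => ∑ j, bprod D s t i0 j) = fun t : ℕ => (1 : ℝ) :=
      funext fun t => (hRSP s t).2 i0
    rw [h3] at h1
    exact tendsto_nhds_unique h1 h2
  -- absolute probability sequence property
  have hμvec : ∀ s, μ s = Matrix.vecMul (μ (s + 1)) (D s) := by
    intro s
    funext j
    have h1 : Tendsto (fun t => bprod D s t i0 j) atTop (nhds (μ s j)) := hconv s i0 j
    have h2 : Tendsto (fun t => ∑ m, bprod D (s + 1) t i0 m * D s m j) atTop
        (nhds (∑ m, μ (s + 1) m * D s m j)) :=
      tendsto_finset_sum _ fun m _ => (hconv (s + 1) i0 m).mul tendsto_const_nhds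
    have heq : ∀ᶠ t in atTop, bprod D s t i0 j = ∑ m, bprod D (s + 1) t i0 m * D s m j := by
      refine eventually_atTop.2 ⟨s + 1, fun t ht => ?_⟩
      rw [bprod_split D s s t (by omega) (by omega), bprod_self, Matrix.mul_apply]
    have h1' := h1.congr' heq
    have := tendsto_nhds_unique h1' h2
    rw [this]
    simp [Matrix.vecMul, dotProduct]
  -- constants
  set r : ℝ := 1 - ε with hrdef
  set r' : ℝ := max r (1 / 2) with hr'def
  have hr'0 : (0 : ℝ) < r' := lt_of_lt_of_le (by norm_num) (le_max_right _ _)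
  have hr'1 : r' < 1 := max_lt (by linarith) (by norm_num)
  set q : ℝ := r' ^ ((n : ℝ)⁻¹) with hqdef
  have hq0 : 0 < q := Real.rpow_pos_of_pos hr'0 _
  have hq1 : q < 1 := Real.rpow_lt_one hr'0.le hr'1 (by positivity)
  have hn0 : (n : ℝ) ≠ 0 := Nat.cast_ne_zero.2 (by omega)
  have hqn : q ^ n = r' := by
    rw [hqdef, ← Real.rpow_natCast (r' ^ ((n : ℝ)⁻¹)) n, ← Real.rpow_mul hr'0.le,
      inv_mul_cancel₀ hn0, Real.rpow_one]
  have hq2 : (1 / 2 : ℝ) ≤ q ^ n := by rw [hqn]; exact le_max_right _ _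
  -- chain: r^((e+1)/n) ≤ 2 * q^e
  have chain : ∀ e : ℕ, r ^ ((e + 1) / n) ≤ 2 * q ^ e := by
    intro e
    set d : ℕ := (e + 1) / n with hd
    have hrr' : r ^ d ≤ r' ^ d := pow_le_pow_left₀ (by linarith) (le_max_left _ _) d
    have hr'q : r' ^ d = q ^ (n * d) := by rw [pow_mul, hqn]
    rcases Nat.lt_or_ge (n * d) e with hlt | hge
    · -- n*d < e : q^(n*d) * q^(e - n*d) = q^e, and q^(e-n*d) ≥ q^n = r' ≥ 1/2
      have hmod : n * d + (e + 1) % n = e + 1 := by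
        rw [hd]; exact Nat.div_add_mod (e + 1) n
      have hmodlt : (e + 1) % n < n := Nat.mod_lt _ (by omega)
      have hediff : e - n * d ≤ n := by omega
      have hsplit : q ^ (n * d) * q ^ (e - n * d) = q ^ e := by
        rw [← pow_add]; congr 1; omega
      have hge2 : q ^ n ≤ q ^ (e - n * d) :=
        pow_le_pow_of_le_one hq0.le hq1.le hediff
      have hpos : (0 : ℝ) ≤ q ^ (n * d) := pow_nonneg hq0.le _
      nlinarith [hsplit, hq2, hge2]
    · -- n*d ≥ e
      have : q ^ (n * d) ≤ q ^ e := pow_le_pow_of_le_one hq0.le hq1.le hge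
      have hpos : (0 : ℝ) ≤ q ^ e := pow_nonneg hq0.le _
      nlinarith [hrr', hr'q]
  -- assemble
  refine ⟨ε, ⟨hε0, hε1⟩, μ, ?_, ?_, hμvec, 2, by norm_num, q, ⟨hq0, hq1⟩, ?_⟩
  · exact fun s => ⟨fun i => le_trans hε0.le (hμε s i), hμsum s⟩
  · exact hμε
  · intro t s hst i j
    have hentry : ((bprod D s t - Matrix.vecMulVec (fun _ => 1) (μ s) :
        Matrix (Fin n) (Fin n) ℝ)) i j = bprod D s t i j - μ s j := by
      simp [Matrix.sub_apply, Matrix.vecMulVec_apply]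
    rw [hentry]
    have h1 := key s t i j hst
    have h2 : t + 1 - s = (t - s) + 1 := by omega
    rw [h2] at h1
    calc |bprod D s t i j - μ s j| ≤ r ^ ((t - s + 1) / n) := h1
      _ ≤ 2 * q ^ (t - s) := chain (t - s)
end

section
/- Let n, p ≥ 1 and C ≥ 1 be integers and α ∈ (0,1). Let (E_k)_{k≥0} be edge sets E_k ⊆ {1,…,n}×{1,…,n} with (i,i) ∈ E_k for all i, k, such that for every k ≥ 0 the directed graph with edge set ∪_{l=k}^{k+C−1} E_l is strongly connected. Let (A_k) be row-stochastic n×n matrices with [A_k]_{ij} > 0 ⇔ (i,j) ∈ E_k and [A_k]_{ij} ≥ α on edges, and let (φ_k) be an absolute probability sequence for (A_k). Set Q_A = 2n(1+α^{−nC})/(1−α^{nC}), and let C̄_A ≥ C be an integer such that γ_A := Q_A (1−α^{nC})^{(C̄_A−1)/(nC)} < 1. Then for every k ≥ C̄_A−1 and every b ∈ (ℝ^p)^n, setting a = (A_k A_{k−1} ⋯ A_{k−C̄_A+1} ⊗ I_p) b, one has ‖((I_n − 1_n φ_{k+1}ᵀ) ⊗ I_p) a‖ ≤ γ_A ‖((I_n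 − 1_n φ_{k−C̄_A+1}ᵀ) ⊗ I_p) b‖. -/
open Matrix

/-- The blockwise action `(M ⊗ I_p)` of an `n×n` matrix on `(ℝ^p)^n`:
`((M ⊗ I_p)x)^i = ∑_j M_{ij} x^j`. -/
noncomputable def mapp {n p : ℕ} (M : Matrix (Fin n) (Fin n) ℝ)
    (x : Fin n → EuclideanSpace ℝ (Fin p)) : Fin n → EuclideanSpace ℝ (Fin p) :=
  fun i => ∑ j, M i j • x j

/-- The matrix `I_n − 1_n φᵀ`. -/
noncomputable def proj {n : ℕ} (φ : Fin n → ℝ) : Matrix (Fin n) (Fin n) ℝ :=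
  1 - Matrix.vecMulVec (fun _ => 1) φ

/-!
Over any `n * C` consecutive steps the product of the `A_k` has all entries at least
`β = α ^ (n * C)`: self-loops keep positive entries positive, and since each window of `C` edge
sets is strongly connected, every column of the product gains a positive entry every `C` steps
until it is positive throughout. A row-stochastic matrix with all entries at least `β` shrinks
the spread `max_i - min_i` of every column by the factor `1 - β`, so the `C̄_A`-fold product `P`
has column spread at most `(1 - β) ^ ⌊C̄_A / (n C)⌋`. Because `φ_{k+1}ᵀ P = φ_{k-C̄_A+1}ᵀ`,
`(I - 1 φ_{k+1}ᵀ) P = (P - 1 φ_{k-C̄_A+1}ᵀ) (I - 1 φ_{k-C̄_A+1}ᵀ)`, and each entry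
`P_ij - (φ_{k-C̄_A+1})_j` of the first factor is a convex combination of differences
`P_ij - P_aj`, hence bounded by the spread. An entrywise bound `δ` bounds the block action by
`n δ`, and `Q_A` is large enough to absorb both `n` and the rounding of the exponent.
-/

open Finset

section windowProd

variable {M : Type*} [Monoid M]

def windowProd (A : ℕ → M) (s : ℕ) : ℕ → M
  | 0 => 1
  | L + 1 => A (s + L) * windowProd A s L

@[simp] lemma windowProd_zero (A : ℕ → M) (s : ℕ) : windowProd A s 0 = 1 := rfl

lemma windowProd_succ (A : ℕ → M) (s L : ℕ) :
    windowProd A s (L + 1) = A (s + L) * windowProd A s L := rfl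

lemma windowProd_add (A : ℕ → M) (s K L : ℕ) :
    windowProd A s (K + L) = windowProd A (s + K) L * windowProd A s K := by
  induction L with
  | zero => simp
  | succ L ih => rw [← add_assoc, windowProd_succ, ih, windowProd_succ, add_assoc, mul_assoc]

lemma windowProd_mem {S : Submonoid M} {A : ℕ → M} (hA : ∀ k, A k ∈ S) (s L : ℕ) :
    windowProd A s L ∈ S := by
  induction L with
  | zero => exact S.one_mem
  | succ L ih => exact S.mul_mem (hA _) ih

end windowProd

lemma bprod_eq_windowProd {n : ℕ} (A : ℕ → Matrix (Fin n) (Fin n) ℝ) (lo hi : ℕ) :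
    bprod A lo hi = windowProd A lo (hi + 1 - lo) := by
  unfold bprod
  induction hi + 1 - lo with
  | zero => rfl
  | succ L ih => simp [List.range_succ, ih, windowProd_succ]

lemma vecMul_windowProd {ι R : Type*} [Fintype ι] [DecidableEq ι] [Semiring R]
    {A : ℕ → Matrix ι ι R} {φ : ℕ → ι → R} (hφ : ∀ k, φ k = φ (k + 1) ᵥ* A k) (s L : ℕ) :
    φ (s + L) ᵥ* windowProd A s L = φ s := by
  induction L with
  | zero => simp
  | succ L ih => rw [windowProd_succ, ← vecMul_vecMul, ← add_assoc, ← hφ, ih]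

section Positivity

variable {ι : Type*} [Fintype ι]

lemma Matrix.mul_apply_pos {M N : Matrix ι ι ℝ} (hM : ∀ i j, 0 ≤ M i j) (hN : ∀ i j, 0 ≤ N i j)
    {i a j : ι} (hMa : 0 < M i a) (hNa : 0 < N a j) : 0 < (M * N) i j :=
  sum_pos' (fun c _ => mul_nonneg (hM i c) (hN c j)) ⟨a, mem_univ a, mul_pos hMa hNa⟩

lemma Matrix.exists_pos_of_mul_apply_pos {M N : Matrix ι ι ℝ} (hM : ∀ i j, 0 ≤ M i j) {i j : ι}
    (h : 0 < (M * N) i j) : ∃ a, 0 < M i a ∧ 0 < N a j := by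
  obtain ⟨a, -, ha⟩ := exists_lt_of_sum_lt (s := univ) (f := fun _ => (0 : ℝ))
    (by simpa [mul_apply] using h)
  exact ⟨a, (pos_and_pos_or_neg_and_neg_of_mul_pos ha).resolve_right
    fun h' => (hM i a).not_gt h'.1⟩

noncomputable def colSupport (M : Matrix ι ι ℝ) (j : ι) : Finset ι := {x | 0 < M x j}

@[simp] lemma mem_colSupport {M : Matrix ι ι ℝ} {i j : ι} : i ∈ colSupport M j ↔ 0 < M i j := by
  simp [colSupport]

variable [DecidableEq ι] {A : ℕ → Matrix ι ι ℝ}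

lemma windowProd_nonneg (hA : ∀ k i j, 0 ≤ A k i j) (s L : ℕ) (i j : ι) :
    0 ≤ windowProd A s L i j := by
  induction L generalizing i with
  | zero => rw [windowProd_zero, one_apply]; positivity
  | succ L ih => exact sum_nonneg fun a _ => mul_nonneg (hA _ _ _) (ih a)

lemma pow_le_windowProd_apply_of_pos {α : ℝ} (hα : 0 ≤ α) (hA : ∀ k i j, 0 ≤ A k i j)
    (hAα : ∀ k i j, 0 < A k i j → α ≤ A k i j) {s t : ℕ} {i j : ι}
    (h : 0 < windowProd A s t i j) : α ^ t ≤ windowProd A s t i j := by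
  induction t generalizing i with
  | zero =>
    rcases eq_or_ne i j with rfl | hij
    · simp
    · simp [one_apply_ne hij] at h
  | succ t ih =>
    rw [windowProd_succ] at h ⊢
    obtain ⟨a, hia, haj⟩ := exists_pos_of_mul_apply_pos (hA _) h
    calc α ^ (t + 1) = α * α ^ t := pow_succ' α t
      _ ≤ A (s + t) i a * windowProd A s t a j :=
        mul_le_mul (hAα _ _ _ hia) (ih haj) (by positivity) hia.le
      _ ≤ (A (s + t) * windowProd A s t) i j :=
        single_le_sum (f := fun a => A (s + t) i a * windowProd A s t a j)
          (fun c _ => mul_nonneg (hA _ _ _) (windowProd_nonneg hA s t c j)) (mem_univ a)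

lemma windowProd_apply_pos_mono (hA : ∀ k i j, 0 ≤ A k i j) (hdiag : ∀ k i, 0 < A k i i)
    {s t t' : ℕ} (htt' : t ≤ t') {i j : ι} (h : 0 < windowProd A s t i j) :
    0 < windowProd A s t' i j := by
  induction htt' with
  | refl => exact h
  | step _ ih => exact mul_apply_pos (hA _) (windowProd_nonneg hA s _) (hdiag _ i) ih

lemma windowProd_apply_self_pos (hA : ∀ k i j, 0 ≤ A k i j) (hdiag : ∀ k i, 0 < A k i i)
    (s t : ℕ) (j : ι) : 0 < windowProd A s t j j :=
  windowProd_apply_pos_mono hA hdiag t.zero_le (by simp)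

end Positivity

lemma Relation.TransGen.exists_rel_of_mem_of_not_mem {γ : Type*} {r : γ → γ → Prop} {S : Set γ}
    {x y : γ} (h : Relation.TransGen r x y) (hx : x ∈ S) (hy : y ∉ S) :
    ∃ a ∈ S, ∃ b ∉ S, r a b := by
  induction h with
  | single hxy => exact ⟨x, hx, _, hy, hxy⟩
  | @tail c d _ hcd ih =>
    by_cases hc : c ∈ S
    · exact ⟨c, hc, d, hy, hcd⟩
    · exact ih hc

section Scrambling

variable {n C : ℕ} {A : ℕ → Matrix (Fin n) (Fin n) ℝ} {E : ℕ → Set (Fin n × Fin n)}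

lemma exists_windowProd_apply_pos_of_not_pos (hC : 1 ≤ C) (hA : ∀ k i j, 0 ≤ A k i j)
    (hdiag : ∀ k i, 0 < A k i i) (hE : ∀ k i j, (i, j) ∈ E k → 0 < A k i j)
    (hconn : ∀ k, StronglyConnected (⋃ l ∈ Icc k (k + C - 1), E l)) {s t : ℕ} {i j : Fin n}
    (hi : ¬ 0 < windowProd A s t i j) :
    ∃ b, ¬ 0 < windowProd A s t b j ∧ 0 < windowProd A s (t + C) b j := by
  have hjj := windowProd_apply_self_pos hA hdiag s t j
  -- A path from `j` to `i` leaves the support of column `j` along an edge `b ⟶ a` that is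
  -- active at some time `l` of the window, making `b` positive from time `l - s + 1 ≤ t + C` on.
  have hij : i ≠ j := by rintro rfl; exact hi hjj
  obtain ⟨a, ha, b, hb, hba⟩ := (hconn (s + t) i j hij).exists_rel_of_mem_of_not_mem
    (S := {x | 0 < windowProd A s t x j}) hjj hi
  simp only [Set.mem_iUnion, mem_Icc] at hba
  obtain ⟨l, ⟨hl₁, hl₂⟩, hba⟩ := hba
  refine ⟨b, hb, windowProd_apply_pos_mono hA hdiag (t := l - s + 1) (by omega) ?_⟩
  rw [windowProd_succ, show s + (l - s) = l by omega]
  exact mul_apply_pos (hA l) (windowProd_nonneg hA _ _) (hE _ _ _ hba)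
    (windowProd_apply_pos_mono hA hdiag (by omega) ha)

lemma card_colSupport_windowProd_ge (hC : 1 ≤ C) (hA : ∀ k i j, 0 ≤ A k i j)
    (hdiag : ∀ k i, 0 < A k i i) (hE : ∀ k i j, (i, j) ∈ E k → 0 < A k i j)
    (hconn : ∀ k, StronglyConnected (⋃ l ∈ Icc k (k + C - 1), E l)) (s : ℕ) (j : Fin n)
    (q : ℕ) : min n (q + 1) ≤ #(colSupport (windowProd A s (q * C)) j) := by
  induction q with
  | zero =>
    have : 0 < #(colSupport (windowProd A s (0 * C)) j) :=
      card_pos.2 ⟨j, mem_colSupport.2 (windowProd_apply_self_pos hA hdiag s _ j)⟩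
    omega
  | succ q ih =>
    have hsub : colSupport (windowProd A s (q * C)) j ⊆
        colSupport (windowProd A s ((q + 1) * C)) j := fun x hx => mem_colSupport.2 <|
        windowProd_apply_pos_mono hA hdiag (Nat.mul_le_mul_right C q.le_succ) (mem_colSupport.1 hx)
    by_cases hall : ∀ x, 0 < windowProd A s (q * C) x j
    · rw [eq_univ_of_forall fun x => hsub (mem_colSupport.2 (hall x)), card_univ,
        Fintype.card_fin]
      omega
    · obtain ⟨i, hi⟩ := not_forall.1 hall
      obtain ⟨b, hb, hb'⟩ := exists_windowProd_apply_pos_of_not_pos hC hA hdiag hE hconn hi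
      have hlt := card_lt_card <| (ssubset_iff_of_subset hsub).2
        ⟨b, mem_colSupport.2 (by rwa [Nat.succ_mul]), fun h => hb (mem_colSupport.1 h)⟩
      omega

lemma pow_le_windowProd_apply (hC : 1 ≤ C) {α : ℝ} (hα : 0 ≤ α) (hA : ∀ k i j, 0 ≤ A k i j)
    (hAα : ∀ k i j, 0 < A k i j → α ≤ A k i j) (hdiag : ∀ k i, 0 < A k i i)
    (hE : ∀ k i j, (i, j) ∈ E k → 0 < A k i j)
    (hconn : ∀ k, StronglyConnected (⋃ l ∈ Icc k (k + C - 1), E l)) (s : ℕ) (i j : Fin n) :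
    α ^ (n * C) ≤ windowProd A s (n * C) i j := by
  have hcard := card_colSupport_windowProd_ge hC hA hdiag hE hconn s j n
  have hfull : colSupport (windowProd A s (n * C)) j = univ := by
    apply eq_univ_of_card
    have := card_le_univ (colSupport (windowProd A s (n * C)) j)
    simp only [Fintype.card_fin] at this ⊢
    omega
  exact pow_le_windowProd_apply_of_pos hα hA hAα (mem_colSupport.1 (hfull ▸ mem_univ i))

end Scrambling

section Contraction

variable {ι : Type*} [Fintype ι]

lemma abs_apply_sub_vecMul_apply_le {P : Matrix ι ι ℝ} {w : ι → ℝ} (hw : w ∈ stdSimplex ℝ ι)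
    {D : ℝ} {j : ι} (hP : ∀ a a', P a j - P a' j ≤ D) (i : ι) :
    |P i j - (w ᵥ* P) j| ≤ D := by
  have hcomb : P i j - (w ᵥ* P) j = ∑ a, w a * (P i j - P a j) := by
    simp [vecMul, dotProduct, mul_sub, sum_sub_distrib, ← sum_mul, hw.2]
  rw [hcomb]
  calc |∑ a, w a * (P i j - P a j)| ≤ ∑ a, w a * |P i j - P a j| := by
        refine (abs_sum_le_sum_abs _ _).trans_eq (sum_congr rfl fun a _ => ?_)
        rw [abs_mul, abs_of_nonneg (hw.1 a)]
    _ ≤ ∑ a, w a * D :=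
        sum_le_sum fun a _ => mul_le_mul_of_nonneg_left (abs_sub_le_iff.2 ⟨hP i a, hP a i⟩) (hw.1 a)
    _ = D := by rw [← sum_mul, hw.2, one_mul]

variable [DecidableEq ι]

lemma mul_apply_sub_mul_apply_le {B N : Matrix ι ι ℝ} (hB : B ∈ rowStochastic ℝ ι) {β D : ℝ}
    (hβ : ∀ i a, β ≤ B i a) {j : ι} (hN : ∀ a a', N a j - N a' j ≤ D) (i i' : ι) :
    (B * N) i j - (B * N) i' j ≤ (1 - β) * D := by
  -- Measured from the column minimum `N a₀ j`, row `i` of `B * N` loses the weight `B i a₀ ≥ β`.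
  obtain ⟨a₀, -, ha₀⟩ := exists_min_image univ (fun a => N a j) ⟨i, mem_univ i⟩
  have hshift : ∀ x, (B * N) x j - N a₀ j = ∑ a, B x a * (N a j - N a₀ j) := fun x => by
    simp [mul_apply, mul_sub, sum_sub_distrib, ← sum_mul, sum_row_of_mem_rowStochastic hB]
  have hupper : (B * N) i j - N a₀ j ≤ (1 - β) * D := by
    rw [hshift, ← add_sum_erase _ _ (mem_univ a₀), sub_self, mul_zero, zero_add]
    calc ∑ a ∈ univ.erase a₀, B i a * (N a j - N a₀ j)
        ≤ ∑ a ∈ univ.erase a₀, B i a * D :=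
          sum_le_sum fun a _ => mul_le_mul_of_nonneg_left (hN a a₀) (hB.1 i a)
      _ = (1 - B i a₀) * D := by
          rw [← sum_mul, sum_erase_eq_sub (mem_univ _), sum_row_of_mem_rowStochastic hB]
      _ ≤ (1 - β) * D := by
          have : 0 ≤ D := by simpa using hN i i
          gcongr
          exact hβ i a₀
  have hlower : 0 ≤ (B * N) i' j - N a₀ j := by
    rw [hshift]
    exact sum_nonneg fun a _ => mul_nonneg (hB.1 _ _) (sub_nonneg.2 (ha₀ a (mem_univ a)))
  linarith

lemma windowProd_apply_sub_le {A : ℕ → Matrix ι ι ℝ} (hA : ∀ k, A k ∈ rowStochastic ℝ ι)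
    {K : ℕ} {β : ℝ} (hβ : ∀ s i j, β ≤ windowProd A s K i j) {q L : ℕ} (hL : q * K ≤ L)
    (s : ℕ) (i i' j : ι) : windowProd A s L i j - windowProd A s L i' j ≤ (1 - β) ^ q := by
  induction q generalizing L i i' with
  | zero =>
    have hW := windowProd_mem hA s L
    have := le_one_of_mem_rowStochastic hW (i := i) (j := j)
    have := nonneg_of_mem_rowStochastic hW (i := i') (j := j)
    rw [pow_zero]
    linarith
  | succ q ih =>
    rw [Nat.succ_mul] at hL
    obtain ⟨L, rfl⟩ : ∃ L', L = L' + K := ⟨L - K, by omega⟩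
    rw [windowProd_add, pow_succ']
    exact mul_apply_sub_mul_apply_le (windowProd_mem hA _ _) (hβ _)
      (fun a a' => ih (by omega) a a') i i'

end Contraction

lemma proj_mul_eq_mul_proj {n : ℕ} {P : Matrix (Fin n) (Fin n) ℝ} (hP : P *ᵥ 1 = 1)
    {ψ : Fin n → ℝ} (hψ : ψ ⬝ᵥ 1 = 1) :
    proj ψ * P = (P - vecMulVec 1 (ψ ᵥ* P)) * proj (ψ ᵥ* P) := by
  have hψP : (ψ ᵥ* P) ⬝ᵥ 1 = 1 := by rw [← dotProduct_mulVec, hP, hψ]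
  set V := vecMulVec (1 : Fin n → ℝ) (ψ ᵥ* P) with hV
  have hPV : P * V = V := by rw [hV, mul_vecMulVec, hP]
  have hVV : V * V = V := by rw [hV, vecMulVec_mul_vecMulVec, hψP, one_smul]
  show (1 - vecMulVec 1 ψ) * P = (P - V) * (1 - V)
  rw [sub_mul, one_mul, vecMulVec_mul, ← hV, mul_sub, mul_one, sub_mul, hPV, hVV, sub_self,
    sub_zero]

lemma mapp_mapp {n p : ℕ} (M N : Matrix (Fin n) (Fin n) ℝ)
    (b : Fin n → EuclideanSpace ℝ (Fin p)) : mapp M (mapp N b) = mapp (M * N) b := by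
  funext i
  simp only [mapp, mul_apply, smul_sum, smul_smul, sum_smul]
  exact sum_comm

lemma bnorm_mapp_le {n p : ℕ} {M : Matrix (Fin n) (Fin n) ℝ} {δ : ℝ} (hδ : 0 ≤ δ)
    (hM : ∀ i j, |M i j| ≤ δ) (b : Fin n → EuclideanSpace ℝ (Fin p)) :
    bnorm (mapp M b) ≤ n * δ * bnorm b := by
  have hrow : ∀ i, ‖mapp M b i‖ ≤ δ * ∑ j, ‖b j‖ := fun i =>
    calc ‖mapp M b i‖ ≤ ∑ j, |M i j| * ‖b j‖ := by
          simpa only [mapp, norm_smul, Real.norm_eq_abs] using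
            norm_sum_le univ fun j => M i j • b j
      _ ≤ δ * ∑ j, ‖b j‖ := by
          rw [mul_sum]
          exact sum_le_sum fun j _ => mul_le_mul_of_nonneg_right (hM i j) (norm_nonneg _)
  have hcs : (∑ j, ‖b j‖) ^ 2 ≤ n * ∑ j, ‖b j‖ ^ 2 := by
    simpa using sq_sum_le_card_mul_sum_sq (s := univ) (f := fun j => ‖b j‖)
  have hsq : ∑ i, ‖mapp M b i‖ ^ 2 ≤ (n * δ) ^ 2 * ∑ j, ‖b j‖ ^ 2 :=
    calc ∑ i, ‖mapp M b i‖ ^ 2 ≤ ∑ _i : Fin n, (δ * ∑ j, ‖b j‖) ^ 2 :=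
          sum_le_sum fun i _ => pow_le_pow_left₀ (norm_nonneg _) (hrow i) 2
      _ = n * δ ^ 2 * (∑ j, ‖b j‖) ^ 2 := by simp; ring
      _ ≤ n * δ ^ 2 * (n * ∑ j, ‖b j‖ ^ 2) := by gcongr
      _ = (n * δ) ^ 2 * ∑ j, ‖b j‖ ^ 2 := by ring
  calc bnorm (mapp M b) ≤ Real.sqrt ((n * δ) ^ 2 * ∑ j, ‖b j‖ ^ 2) := Real.sqrt_le_sqrt hsq
    _ = n * δ * bnorm b := by rw [Real.sqrt_mul (sq_nonneg _), Real.sqrt_sq (by positivity), bnorm]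

lemma cast_sub_one_div_le_div_add_one (a d : ℕ) : ((a : ℝ) - 1) / d ≤ (a / d : ℕ) + 1 :=
  calc ((a : ℝ) - 1) / d ≤ a / d := by gcongr; linarith
    _ ≤ (a / d : ℕ) + 1 := by
      rw [← Nat.floor_div_eq_div (K := ℝ)]
      exact (Nat.lt_floor_add_one _).le

lemma mul_pow_le_mul_rpow {β c x : ℝ} (hβ₀ : 0 < β) (hβ₁ : β < 1) (hc : 0 ≤ c) {m : ℕ}
    (hx : x ≤ m + 1) : c * (1 - β) ^ m ≤ 2 * c * (1 + β⁻¹) / (1 - β) * (1 - β) ^ x := by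
  have hpow : (1 - β) ^ (m + 1) ≤ (1 - β) ^ x := by
    rw [← Real.rpow_natCast, Nat.cast_succ]
    exact Real.rpow_le_rpow_of_exponent_ge (by linarith) (by linarith) hx
  have hβinv : 0 ≤ β⁻¹ := inv_nonneg.2 hβ₀.le
  calc c * (1 - β) ^ m ≤ 2 * c * (1 + β⁻¹) * (1 - β) ^ m := by
        gcongr; nlinarith
    _ = 2 * c * (1 + β⁻¹) / (1 - β) * (1 - β) ^ (m + 1) := by
        rw [pow_succ', ← mul_assoc, div_mul_cancel₀ _ (by linarith)]
    _ ≤ 2 * c * (1 + β⁻¹) / (1 - β) * (1 - β) ^ x := by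
        gcongr

theorem stmt12_general (n p C : ℕ) (hn : 1 ≤ n) (hC : 1 ≤ C)
    (α : ℝ) (hα : α ∈ Set.Ioo (0 : ℝ) 1)
    (E : ℕ → Set (Fin n × Fin n))
    (hself : ∀ k (i : Fin n), (i, i) ∈ E k)
    (hconn : ∀ k, StronglyConnected (⋃ l ∈ Finset.Icc k (k + C - 1), E l))
    (A : ℕ → Matrix (Fin n) (Fin n) ℝ)
    (hAnn : ∀ k i j, 0 ≤ A k i j) (hArow : ∀ k i, ∑ j, A k i j = 1)
    (hAcomp : ∀ k i j, 0 < A k i j ↔ (i, j) ∈ E k)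
    (hAα : ∀ k i j, (i, j) ∈ E k → α ≤ A k i j)
    (φ : ℕ → Fin n → ℝ)
    (hφst : ∀ k, (∀ i, 0 ≤ φ k i) ∧ ∑ i, φ k i = 1)
    (hφabs : ∀ k, φ k = Matrix.vecMul (φ (k + 1)) (A k))
    (QA : ℝ) (hQA : QA = 2 * n * (1 + (α ^ (n * C))⁻¹) / (1 - α ^ (n * C)))
    (CbA : ℕ)
    (γA : ℝ)
    (hγA : γA = QA * (1 - α ^ (n * C)) ^ (((CbA : ℝ) - 1) / ((n : ℝ) * C))) :
    ∀ k, CbA - 1 ≤ k → ∀ b : Fin n → EuclideanSpace ℝ (Fin p),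
      bnorm (mapp (proj (φ (k + 1))) (mapp (bprod A (k + 1 - CbA) k) b)) ≤
        γA * bnorm (mapp (proj (φ (k + 1 - CbA))) b) := by
  intro k hk b
  have hnC : 0 < n * C := Nat.mul_pos hn hC
  set lo := k + 1 - CbA
  set P := windowProd A lo CbA
  have hA : ∀ k, A k ∈ rowStochastic ℝ (Fin n) :=
    fun k => mem_rowStochastic_iff_sum.2 ⟨hAnn k, hArow k⟩
  have hφP : φ (k + 1) ᵥ* P = φ lo := by
    simpa [show lo + CbA = k + 1 by omega] using vecMul_windowProd hφabs lo CbA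
  have hmin : ∀ s i j, α ^ (n * C) ≤ windowProd A s (n * C) i j :=
    pow_le_windowProd_apply hC hα.1.le hAnn (fun k i j h => hAα k i j ((hAcomp k i j).1 h))
      (fun k i => (hAcomp k i i).2 (hself k i)) (fun k i j => (hAcomp k i j).2) hconn
  have hentry : ∀ i j, |(P - vecMulVec 1 (φ lo) : Matrix (Fin n) (Fin n) ℝ) i j| ≤
      (1 - α ^ (n * C)) ^ (CbA / (n * C)) := by
    intro i j
    rw [Matrix.sub_apply, vecMulVec_apply, Pi.one_apply, one_mul, ← hφP]
    exact abs_apply_sub_vecMul_apply_le (hφst _)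
      (fun a a' => windowProd_apply_sub_le hA hmin (Nat.div_mul_le_self CbA (n * C)) lo a a' j) i
  have hβ₀ : 0 < α ^ (n * C) := pow_pos hα.1 _
  have hβ₁ : α ^ (n * C) < 1 := pow_lt_one₀ hα.1.le hα.2 hnC.ne'
  rw [bprod_eq_windowProd, show k + 1 - lo = CbA by omega, mapp_mapp,
    proj_mul_eq_mul_proj (one_vecMul_of_mem_rowStochastic (windowProd_mem hA lo CbA))
      (by simpa [dotProduct] using (hφst (k + 1)).2), hφP, ← mapp_mapp]
  calc _ ≤ n * (1 - α ^ (n * C)) ^ (CbA / (n * C)) * bnorm (mapp (proj (φ lo)) b) :=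
        bnorm_mapp_le (pow_nonneg (by linarith) _) hentry _
    _ ≤ γA * bnorm (mapp (proj (φ lo)) b) := by
        gcongr
        · exact Real.sqrt_nonneg _
        · rw [hγA, hQA]
          exact mul_pow_le_mul_rpow hβ₀ hβ₁ (Nat.cast_nonneg n)
            (by exact_mod_cast cast_sub_one_div_le_div_add_one CbA (n * C))

/-- `C̄_A`-step contraction for the sequence of row-stochastic matrices `(A_k)`
(Lemma 8 / Lemma 5.3 of DIGing). -/
theorem stmt12 (n p C : ℕ) (hn : 1 ≤ n) (hp : 1 ≤ p) (hC : 1 ≤ C)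
    (α : ℝ) (hα : α ∈ Set.Ioo (0 : ℝ) 1)
    (E : ℕ → Set (Fin n × Fin n))
    (hself : ∀ k (i : Fin n), (i, i) ∈ E k)
    (hconn : ∀ k, StronglyConnected (⋃ l ∈ Finset.Icc k (k + C - 1), E l))
    (A : ℕ → Matrix (Fin n) (Fin n) ℝ)
    (hAnn : ∀ k i j, 0 ≤ A k i j) (hArow : ∀ k i, ∑ j, A k i j = 1)
    (hAcomp : ∀ k i j, 0 < A k i j ↔ (i, j) ∈ E k)
    (hAα : ∀ k i j, (i, j) ∈ E k → α ≤ A k i j)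
    (φ : ℕ → Fin n → ℝ)
    (hφst : ∀ k, (∀ i, 0 ≤ φ k i) ∧ ∑ i, φ k i = 1)
    (hφabs : ∀ k, φ k = Matrix.vecMul (φ (k + 1)) (A k))
    (QA : ℝ) (hQA : QA = 2 * n * (1 + (α ^ (n * C))⁻¹) / (1 - α ^ (n * C)))
    (CbA : ℕ) (hCbA : C ≤ CbA)
    (γA : ℝ)
    (hγA : γA = QA * (1 - α ^ (n * C)) ^ (((CbA : ℝ) - 1) / ((n : ℝ) * C)))
    (hγA1 : γA < 1) :
    ∀ k, CbA - 1 ≤ k → ∀ b : Fin n → EuclideanSpace ℝ (Fin p),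
      bnorm (mapp (proj (φ (k + 1))) (mapp (bprod A (k + 1 - CbA) k) b)) ≤
        γA * bnorm (mapp (proj (φ (k + 1 - CbA))) b) :=
  stmt12_general n p C hn hC α hα E hself hconn A hAnn hArow hAcomp hAα φ hφst hφabs QA hQA CbA γA
    hγA
end
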